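/- arXiv:1412.6349 — 7 statements merged into one kernel-verified Lean document; each statement's English description precedes it below -/
import Mathlib

section
/- For every n ≥ 1 there exists a signed graph G_n with χ(G̲_n) = n and signed chromatic number χ(G_n) = 2n − 1; in particular, the bound χ(G) ≤ 2χ(G̲) − 1 is sharp. Concretely, G_n is formed by taking one all-positive copy H_1 of K_n and n−1 all-negative copies H_2,…,H_n of K_n, with vertices v_{i,1},…,v_{i,n} in each copy, and joining every pair of vertices v_{i,k}, v_{j,l} from different copies with k ≠ l by a positive edge. -/
/-- The colour set `M_n`: `{±1,…,±k}` if `n = 2k`, and `{0,±1,…,±k}` if `n = 2k+1`. -/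
def Mset (n : ℕ) : Set ℤ := {x | 2 * x.natAbs ≤ n ∧ (x ≠ 0 ∨ n % 2 = 1)}

/-- `σ` is a signature: symmetric with values in `{+1, -1}`. -/
def IsSignature {V : Type*} (σ : V → V → ℤ) : Prop :=
  (∀ u v, σ u v = σ v u) ∧ (∀ u v, σ u v = 1 ∨ σ u v = -1)

/-- A proper colouring of the signed graph `(G, σ)`. -/
def IsProperSignedColoring {V : Type*} (G : SimpleGraph V) (σ : V → V → ℤ) (φ : V → ℤ) : Prop :=
  ∀ u v, G.Adj u v → φ u ≠ σ u v * φ v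

/-- `(G, σ)` admits a proper colouring with colours in `M_n`. -/
def SignedColorable {V : Type*} (G : SimpleGraph V) (σ : V → V → ℤ) (n : ℕ) : Prop :=
  ∃ φ : V → ℤ, IsProperSignedColoring G σ φ ∧ ∀ v, φ v ∈ Mset n

/-- The chromatic number of the signed graph `(G, σ)`. -/
noncomputable def signedChromaticNumber {V : Type*} (G : SimpleGraph V) (σ : V → V → ℤ) : ℕ :=
  sInf {n | SignedColorable G σ n}

/-- The graph `G_n`: vertex `(i, j)` is the vertex `v_{i+1, j+1}` of the copy `H_{i+1}` of `K_n`;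
two vertices are adjacent iff they lie in the same copy (and differ), or lie in different
copies and are non-corresponding. -/
def sharpGraph (n : ℕ) : SimpleGraph (Fin n × Fin n) :=
  SimpleGraph.fromRel (fun p q => p.1 = q.1 ∨ p.2 ≠ q.2)

/-- The signature of `G_n`: edges inside the copy `H_1` (index `0`) are positive, edges inside
any other copy are negative, and all edges between different copies are positive. -/
def sharpSign (n : ℕ) : Fin n × Fin n → Fin n × Fin n → ℤ :=
  fun p q => if p.1 = q.1 ∧ (p.1 : ℕ) ≠ 0 then -1 else 1

lemma sharpGraph_adj {n : ℕ} {p q : Fin n × Fin n} :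
    (sharpGraph n).Adj p q ↔ p ≠ q ∧ (p.1 = q.1 ∨ p.2 ≠ q.2) := by
  simp only [sharpGraph, SimpleGraph.fromRel_adj]
  constructor
  · rintro ⟨h1, (h|h)|(h|h)⟩
    exacts [⟨h1, Or.inl h⟩, ⟨h1, Or.inr h⟩, ⟨h1, Or.inl h.symm⟩, ⟨h1, Or.inr (Ne.symm h)⟩]
  · rintro ⟨h1, h⟩; exact ⟨h1, Or.inl h⟩

/-- An injection of `Mset m` into `Fin m`. -/
def gmap (m : ℕ) (x : ℤ) : ℕ :=
  if 0 < x then 2 * x.natAbs - 1 else if x < 0 then 2 * x.natAbs - 2 else m - 1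

lemma gmap_lt {m : ℕ} {x : ℤ} (hx : x ∈ Mset m) : gmap m x < m := by
  obtain ⟨hb, hz⟩ := hx
  unfold gmap; split_ifs <;> rcases hz with hz | hz <;> omega

lemma gmap_inj {m : ℕ} {x y : ℤ} (hx : x ∈ Mset m) (hy : y ∈ Mset m)
    (h : gmap m x = gmap m y) : x = y := by
  obtain ⟨hbx, hzx⟩ := hx
  obtain ⟨hby, hzy⟩ := hy
  unfold gmap at h
  split_ifs at h <;> rcases hzx with h1 | h1 <;> rcases hzy with h2 | h2 <;> omega

lemma card_le_of_inj_Mset {α : Type*} [Fintype α] {m : ℕ} (F : α → ℤ)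
    (hmem : ∀ s, F s ∈ Mset m) (hinj : Function.Injective F) : Fintype.card α ≤ m := by
  simpa using Fintype.card_le_of_injective
    (fun s => (⟨gmap m (F s), gmap_lt (hmem s)⟩ : Fin m))
    (fun s s' h => hinj (gmap_inj (hmem s) (hmem s') (congrArg Fin.val h)))

lemma sharp_colorable (n : ℕ) (hn : 1 ≤ n) :
    SignedColorable (sharpGraph n) (sharpSign n) (2 * n - 1) := by
  refine ⟨fun p => if (p.1 : ℕ) = 0 then (p.2 : ℤ) else -(p.2 : ℤ), ?_, ?_⟩
  · intro u v hadj
    rw [sharpGraph_adj] at hadj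
    obtain ⟨hne, hr⟩ := hadj
    have h2 : (u.2 : ℕ) ≠ (v.2 : ℕ) := by
      intro h
      have h2' : u.2 = v.2 := Fin.val_injective h
      have h1 : u.1 = v.1 := by
        rcases hr with h1 | h1
        · exact h1
        · exact absurd h2' h1
      exact hne (Prod.ext h1 h2')
    have h1 : u.1 = v.1 → (u.1 : ℕ) = (v.1 : ℕ) := fun h => by rw [h]
    simp only [sharpSign]
    split_ifs with hA hB hC <;> omega
  · intro p
    have hlt : (p.2 : ℕ) < n := p.2.isLt
    refine ⟨?_, Or.inr (by omega)⟩
    by_cases h : (p.1 : ℕ) = 0 <;> simp only [h] <;> simp <;> omega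

lemma sharp_lower (n m : ℕ) (hn : 1 ≤ n)
    (h : SignedColorable (sharpGraph n) (sharpSign n) m) : 2 * n - 1 ≤ m := by
  obtain ⟨φ, hp, hmem⟩ := h
  by_contra hcon
  have hm : m ≤ 2 * n - 2 := by omega
  have hP : ∀ u v : Fin n × Fin n, (sharpGraph n).Adj u v → φ u = φ v →
      u.1 = v.1 ∧ (u.1 : ℕ) ≠ 0 := by
    intro u v hadj heq
    by_contra hc
    have := hp u v hadj
    rw [sharpSign, if_neg hc, one_mul] at this
    exact this heq
  have hN : ∀ u v : Fin n × Fin n, (sharpGraph n).Adj u v → u.1 = v.1 → (u.1 : ℕ) ≠ 0 →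
      φ u ≠ -φ v := by
    intro u v hadj hA hB heq
    have := hp u v hadj
    rw [sharpSign, if_pos ⟨hA, hB⟩] at this
    apply this
    rw [heq]; ring
  have key : ∀ i : Fin n, (i : ℕ) ≠ 0 → ∃ a b : Fin n, a ≠ b ∧
      φ (i, a) = φ (i, b) ∧ φ (i, a) ≠ 0 := by
    intro i hi
    have hn2 : 2 ≤ n := by have := i.isLt; omega
    have habs : ∃ a b : Fin n, a ≠ b ∧ (φ (i, a)).natAbs = (φ (i, b)).natAbs := by
      set T : Finset ℕ := if m % 2 = 0 then Finset.Icc 1 (n - 1) else Finset.Icc 0 (n - 2)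
        with hT
      have hTcard : T.card < Finset.univ.card (α := Fin n) := by
        rw [hT]; simp only [Finset.card_univ, Fintype.card_fin]
        split_ifs <;> rw [Nat.card_Icc] <;> omega
      have hmaps : ∀ j : Fin n, j ∈ Finset.univ → (φ (i, j)).natAbs ∈ T := by
        intro j _
        obtain ⟨hb, hz⟩ := hmem (i, j)
        rw [hT]
        split_ifs with hpar <;> rw [Finset.mem_Icc] <;>
          rcases hz with hz | hz <;> omega
      obtain ⟨a, _, b, _, hab, hfab⟩ :=
        Finset.exists_ne_map_eq_of_card_lt_of_maps_to hTcard hmaps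
      exact ⟨a, b, hab, hfab⟩
    obtain ⟨a, b, hab, hfab⟩ := habs
    have hadj : (sharpGraph n).Adj (i, a) (i, b) := by
      rw [sharpGraph_adj]
      exact ⟨fun h => hab (congrArg Prod.snd h), Or.inl rfl⟩
    have hne := hN (i, a) (i, b) hadj rfl hi
    have hor : φ (i, a) = φ (i, b) ∨ φ (i, a) = -φ (i, b) := by omega
    rcases hor with he | he
    · refine ⟨a, b, hab, he, fun h0 => hne ?_⟩
      rw [h0]; rw [h0] at he; omega
    · exact absurd he hne
  choose a b hab heq hne0 using key
  have hc : ∀ i : Fin (n - 1), (i : ℕ) + 1 < n := fun i => by have := i.isLt; omega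
  have hdiff : ∀ p q : Fin n × Fin n, p.1 ≠ q.1 → p.2 ≠ q.2 → φ p ≠ φ q := by
    intro p q h1 h2 he
    have hadj : (sharpGraph n).Adj p q := by
      rw [sharpGraph_adj]
      exact ⟨fun h => h1 (congrArg Prod.fst h), Or.inr h2⟩
    exact h1 (hP p q hadj he).1
  -- the copy index of `i : Fin (n-1)` is `⟨i+1, _⟩`; `d i` is its repeated colour
  have hcne : ∀ i : Fin (n - 1), ((⟨(i : ℕ) + 1, hc i⟩ : Fin n) : ℕ) ≠ 0 := fun i => by simp
  -- nothing outside copy `i+1` has colour `d i`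
  have hdd : ∀ (i : Fin (n - 1)) (q : Fin n × Fin n),
      q.1 ≠ (⟨(i : ℕ) + 1, hc i⟩ : Fin n) →
      φ q ≠ φ (⟨(i : ℕ) + 1, hc i⟩, a ⟨(i : ℕ) + 1, hc i⟩ (hcne i)) := by
    intro i q h1 he
    rcases eq_or_ne q.2 (a ⟨(i : ℕ) + 1, hc i⟩ (hcne i)) with h2 | h2
    · have h3 : q.2 ≠ b ⟨(i : ℕ) + 1, hc i⟩ (hcne i) := by rw [h2]; exact hab _ _
      exact hdiff q (⟨(i : ℕ) + 1, hc i⟩, b ⟨(i : ℕ) + 1, hc i⟩ (hcne i)) h1 h3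
        (he.trans (heq _ _))
    · exact hdiff q (⟨(i : ℕ) + 1, hc i⟩, a ⟨(i : ℕ) + 1, hc i⟩ (hcne i)) h1 h2 he
  have h0inj : ∀ j j' : Fin n, j ≠ j' → φ (⟨0, hn⟩, j) ≠ φ (⟨0, hn⟩, j') := by
    intro j j' hjj he
    have hadj : (sharpGraph n).Adj (⟨0, hn⟩, j) (⟨0, hn⟩, j') := by
      rw [sharpGraph_adj]
      exact ⟨fun h => hjj (congrArg Prod.snd h), Or.inl rfl⟩
    exact (hP _ _ hadj he).2 rfl
  have hcard := card_le_of_inj_Mset (m := m)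
    (Sum.elim (fun j : Fin n => φ (⟨0, hn⟩, j))
      (fun i : Fin (n - 1) => φ (⟨(i : ℕ) + 1, hc i⟩, a ⟨(i : ℕ) + 1, hc i⟩ (hcne i))))
    (by rintro (j | i) <;> exact hmem _)
    (by
      rintro (j | i) (j' | i') he <;>
        simp only [Sum.elim_inl, Sum.elim_inr] at he
      · by_cases hjj : j = j'
        · rw [hjj]
        · exact absurd he (h0inj j j' hjj)
      · exact absurd he (hdd i' (⟨0, hn⟩, j) (fun h => by
          have := congrArg Fin.val h; simp at this))
      · exact absurd he.symm (hdd i (⟨0, hn⟩, j') (fun h => by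
          have := congrArg Fin.val h; simp at this))
      · by_cases hii : i = i'
        · rw [hii]
        · refine absurd he (hdd i' (⟨(i : ℕ) + 1, hc i⟩, a ⟨(i : ℕ) + 1, hc i⟩ (hcne i))
            (fun h => hii ?_))
          have := congrArg Fin.val h
          simp only at this
          exact Fin.val_injective (by omega)
    )
  simp only [Fintype.card_sum, Fintype.card_fin] at hcard
  omega

/-- For every `n ≥ 1`, the signed graph `G_n` satisfies `χ(G̲_n) = n` and `χ(G_n) = 2n − 1`;
hence the bound `χ(G) ≤ 2χ(G̲) − 1` is sharp. -/
theorem sharpness_of_upper_bound (n : ℕ) (hn : 1 ≤ n) :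
    (sharpGraph n).chromaticNumber = (n : ℕ∞) ∧
    signedChromaticNumber (sharpGraph n) (sharpSign n) = 2 * n - 1 := by
  constructor
  · apply le_antisymm
    · apply SimpleGraph.Colorable.chromaticNumber_le
      refine ⟨SimpleGraph.Coloring.mk (fun p => p.2) ?_⟩
      intro p q hadj
      rw [sharpGraph_adj] at hadj
      obtain ⟨h1, h2⟩ := hadj
      rcases h2 with h2 | h2
      · exact fun h => h1 (Prod.ext h2 h)
      · exact h2
    · set s : Finset (Fin n × Fin n) :=
        Finset.univ.image (fun j : Fin n => ((⟨0, hn⟩ : Fin n), j)) with hs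
      have hclique : (sharpGraph n).IsClique s := by
        intro p hp q hq hpq
        rw [sharpGraph_adj]
        simp only [hs, Finset.coe_image, Set.mem_image] at hp hq
        obtain ⟨j, -, rfl⟩ := hp
        obtain ⟨j', -, rfl⟩ := hq
        exact ⟨hpq, Or.inl rfl⟩
      have hcard : s.card = n := by
        rw [hs, Finset.card_image_of_injective _ (fun j j' h => congrArg Prod.snd h)]
        simp
      have := hclique.card_le_chromaticNumber
      rwa [hcard] at this
  · apply le_antisymm
    · exact Nat.sInf_le (sharp_colorable n hn)
    · exact le_csInf ⟨_, sharp_colorable n hn⟩ (fun m hm => sharp_lower n m hn hm)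
end

section
/- Every simple signed graph whose underlying graph is K_4-minor-free satisfies χ(G) ≤ 3. -/
/-- `H` is a minor of `G`, witnessed by disjoint nonempty connected branch sets, one for each
vertex of `H`, with an edge of `G` between the branch sets of any two adjacent vertices of `H`. -/
def HasMinor {V W : Type*} (G : SimpleGraph V) (H : SimpleGraph W) : Prop :=
  ∃ f : W → Set V, (∀ i, (f i).Nonempty) ∧ (∀ i, (G.induce (f i)).Connected) ∧
    (Pairwise fun i j => Disjoint (f i) (f j)) ∧
    ∀ i j, H.Adj i j → ∃ u ∈ f i, ∃ v ∈ f j, G.Adj u v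

open SimpleGraph

universe u

local notation "K₄" => (⊤ : SimpleGraph (Fin 4))

section Minors

variable {U V W : Type*}

theorem SimpleGraph.connected_induce_singleton (G : SimpleGraph V) (x : V) :
    (G.induce {x}).Connected :=
  (connected_iff _).2 ⟨Preconnected.of_subsingleton, inferInstance⟩

theorem SimpleGraph.connected_induce_insert {G : SimpleGraph V} {S : Set V} {x s : V}
    (hS : (G.induce S).Connected) (hs : s ∈ S) (hxs : G.Adj x s) :
    (G.induce (insert x S)).Connected := by
  rw [Set.insert_eq]
  exact connected_induce_union (G.connected_induce_singleton x).preconnected hS.preconnected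
    rfl hs hxs

theorem SimpleGraph.connected_induce_biUnion {G : SimpleGraph V} {H : SimpleGraph W} {T : Set W}
    {f : W → Set V} (hT : (H.induce T).Connected) (hf : ∀ w ∈ T, (G.induce (f w)).Connected)
    (hadj : ∀ w ∈ T, ∀ w' ∈ T, H.Adj w w' → ∃ a ∈ f w, ∃ b ∈ f w', G.Adj a b) :
    (G.induce (⋃ w ∈ T, f w)).Connected := by
  have hsub : ∀ w ∈ T, f w ⊆ ⋃ w ∈ T, f w := fun w hw => Set.subset_biUnion_of_mem hw
  have reach : ∀ x y : T, (H.induce T).Reachable x y →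
      ∀ a (ha : a ∈ f x) b (hb : b ∈ f y),
        (G.induce (⋃ w ∈ T, f w)).Reachable ⟨a, hsub x x.2 ha⟩ ⟨b, hsub y y.2 hb⟩ := by
    rintro x y ⟨p⟩
    induction p with
    | nil =>
      intro a ha b hb
      exact ((hf _ (Subtype.prop _)).preconnected ⟨a, ha⟩ ⟨b, hb⟩).map
        (induceHomOfLE G (hsub _ (Subtype.prop _))).toHom
    | @cons x z y hxz _ ih =>
      intro a ha b hb
      obtain ⟨a', ha', c, hc, hac⟩ := hadj x x.2 z z.2 hxz
      have hedge : (G.induce _).Adj ⟨a', hsub x x.2 ha'⟩ ⟨c, hsub z z.2 hc⟩ := hac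
      exact (((hf x x.2).preconnected ⟨a, ha⟩ ⟨a', ha'⟩).map
        (induceHomOfLE G (hsub x x.2)).toHom).trans (hedge.reachable.trans (ih c hc b hb))
  obtain ⟨⟨w, hw⟩⟩ := hT.nonempty
  obtain ⟨⟨a, ha⟩⟩ := (hf w hw).nonempty
  rw [connected_iff_exists_forall_reachable]
  refine ⟨⟨a, hsub w hw ha⟩, ?_⟩
  rintro ⟨b, hb⟩
  obtain ⟨w', hw', hb'⟩ := Set.mem_iUnion₂.1 hb
  exact reach ⟨w, hw⟩ ⟨w', hw'⟩ (hT.preconnected _ _) a ha b hb'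

theorem HasMinor.trans {G : SimpleGraph U} {H : SimpleGraph V} {K : SimpleGraph W}
    (hGH : HasMinor G H) (hHK : HasMinor H K) : HasMinor G K := by
  obtain ⟨f, -, hfconn, hfdisj, hfadj⟩ := hGH
  obtain ⟨g, hgne, hgconn, hgdisj, hgadj⟩ := hHK
  refine ⟨fun k => ⋃ w ∈ g k, f w, fun k => ?_, fun k => ?_, fun k k' hkk' => ?_,
    fun k k' hkk' => ?_⟩
  · obtain ⟨w, hw⟩ := hgne k
    obtain ⟨⟨a, ha⟩⟩ := (hfconn w).nonempty
    exact ⟨a, Set.mem_biUnion hw ha⟩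
  · exact connected_induce_biUnion (hgconn k) (fun w _ => hfconn w)
      (fun w _ w' _ h => hfadj w w' h)
  · simp only [Set.disjoint_iUnion_left, Set.disjoint_iUnion_right]
    intro w hw w' hw'
    refine hfdisj fun h => ?_
    subst h
    exact Set.disjoint_left.1 (hgdisj hkk') hw' hw
  · obtain ⟨w, hw, w', hw', h⟩ := hgadj k k' hkk'
    obtain ⟨a, ha, b, hb, hab⟩ := hfadj w w' h
    exact ⟨a, Set.mem_biUnion hw ha, b, Set.mem_biUnion hw' hb, hab⟩

theorem hasMinor_of_injective_hom {G : SimpleGraph V} {H : SimpleGraph W} (φ : H →g G)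
    (hφ : Function.Injective φ) : HasMinor G H :=
  ⟨fun w => {φ w}, fun _ => Set.singleton_nonempty _,
    fun _ => G.connected_induce_singleton _,
    fun _ _ h => Set.disjoint_singleton.2 (hφ.ne h),
    fun _ _ h => ⟨_, rfl, _, rfl, φ.map_adj h⟩⟩

theorem hasMinor_induce (G : SimpleGraph V) (s : Set V) : HasMinor G (G.induce s) :=
  hasMinor_of_injective_hom (Embedding.induce s).toHom Subtype.val_injective

theorem hasMinor_top_of_pairwise_adj {G : SimpleGraph V} (f : W → V)
    (hf : Pairwise fun i j => G.Adj (f i) (f j)) : HasMinor G (⊤ : SimpleGraph W) :=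
  hasMinor_of_injective_hom ⟨f, fun h => hf h⟩ fun i j hij => by
    by_contra hne
    exact (hf hne).ne hij

theorem hasMinor_map (G : SimpleGraph V) (π : V → W)
    (hπ : ∀ w, (G.induce (π ⁻¹' {w})).Connected) : HasMinor G (G.map π) :=
  ⟨fun w => π ⁻¹' {w}, fun w => Set.nonempty_coe_sort.1 (hπ w).nonempty, hπ,
    fun _ _ h => Set.disjoint_left.2 fun _ ha hb => h (ha.symm.trans hb),
    fun _ _ ⟨_, a, b, hab, ha, hb⟩ => ⟨a, ha, b, hb, hab⟩⟩

theorem ncard_le_ncard_neighborSet_map [Finite W] {G : SimpleGraph V} {π : V → W} {x : W}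
    {T : Set V} (hinj : Set.InjOn π T)
    (hT : ∀ b ∈ T, π b ≠ x ∧ ∃ a, π a = x ∧ G.Adj a b) :
    T.ncard ≤ ((G.map π).neighborSet x).ncard := by
  rw [← hinj.ncard_image]
  refine Set.ncard_le_ncard ?_ (Set.toFinite _)
  rintro _ ⟨b, hb, rfl⟩
  obtain ⟨hne, a, rfl, hab⟩ := hT b hb
  exact ⟨hne.symm, a, b, hab, rfl, rfl⟩

end Minors

theorem Set.exists_eq_insert_insert_of_ncard_eq_three {α : Type*} {s : Set α}
    (hs : s.ncard = 3) {a b : α} (ha : a ∈ s) (hb : b ∈ s) (hab : a ≠ b) :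
    ∃ c, c ≠ a ∧ c ≠ b ∧ s = {a, b, c} := by
  have hsub : {a, b} ⊆ s := Set.insert_subset ha (Set.singleton_subset_iff.2 hb)
  obtain ⟨c, hc⟩ := Set.ncard_eq_one.1 (show (s \ {a, b}).ncard = 1 by
    rw [Set.ncard_sdiff hsub, hs, Set.ncard_pair hab])
  have hcs : c ∈ s \ {a, b} := hc ▸ rfl
  simp only [Set.mem_sdiff, Set.mem_insert_iff, Set.mem_singleton_iff, not_or] at hcs
  refine ⟨c, hcs.2.1, hcs.2.2, ?_⟩
  rw [← Set.union_sdiff_cancel hsub, hc]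
  ext
  simp only [Set.mem_union, Set.mem_insert_iff, Set.mem_singleton_iff]
  tauto

section Contraction

variable {V : Type*} {G : SimpleGraph V}

open Classical in
/-- `G.map (contractOnto S r)` is `G` with `S` contracted to the single vertex `r`. -/
noncomputable def contractOnto (S : Set V) (r w : V) : {w // w ∉ S ∨ w = r} :=
  if h : w ∈ S then ⟨r, Or.inr rfl⟩ else ⟨w, Or.inl h⟩

variable {S : Set V} {r : V}

theorem contractOnto_of_mem {w : V} (h : w ∈ S) : contractOnto S r w = ⟨r, Or.inr rfl⟩ :=
  dif_pos h

theorem contractOnto_of_notMem {w : V} (h : w ∉ S) : contractOnto S r w = ⟨w, Or.inl h⟩ :=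
  dif_neg h

theorem connected_induce_preimage_contractOnto (hS : (G.induce S).Connected) (hr : r ∈ S)
    (x : {w // w ∉ S ∨ w = r}) : (G.induce (contractOnto S r ⁻¹' {x})).Connected := by
  obtain ⟨y, hy | rfl⟩ := x
  · have hfibre : contractOnto S r ⁻¹' {⟨y, Or.inl hy⟩} = {y} := by
      ext w
      by_cases hw : w ∈ S
      · simp only [Set.mem_preimage, Set.mem_singleton_iff, contractOnto_of_mem hw,
          Subtype.mk.injEq]
        constructor <;> rintro rfl
        exacts [absurd hr hy, absurd hw hy]
      · simp [contractOnto_of_notMem hw]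
    rw [hfibre]
    exact G.connected_induce_singleton y
  · have hfibre : contractOnto S y ⁻¹' {⟨y, Or.inr rfl⟩} = S := by
      ext w
      by_cases hw : w ∈ S
      · simp [contractOnto_of_mem hw, hw]
      · simp only [Set.mem_preimage, contractOnto_of_notMem hw, Set.mem_singleton_iff,
          Subtype.mk.injEq, hw, iff_false]
        rintro rfl
        exact hw hr
    rwa [hfibre]

theorem contractOnto_injOn (hr : r ∈ S) {T : Set V} (hT : (T ∩ S).Subsingleton) :
    Set.InjOn (contractOnto S r) T := by
  intro a ha b hb hab
  by_cases haS : a ∈ S <;> by_cases hbS : b ∈ S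
  · exact hT ⟨ha, haS⟩ ⟨hb, hbS⟩
  · rw [contractOnto_of_mem haS, contractOnto_of_notMem hbS, Subtype.mk.injEq] at hab
    exact absurd (hab ▸ hr) hbS
  · rw [contractOnto_of_notMem haS, contractOnto_of_mem hbS, Subtype.mk.injEq] at hab
    exact absurd (hab ▸ hr) haS
  · rwa [contractOnto_of_notMem haS, contractOnto_of_notMem hbS, Subtype.mk.injEq] at hab

end Contraction

section MinDegreeThree

/-- The root `β` is exempt from the degree condition because contracting a connected set creates a
vertex of uncontrolled degree; making it the new root keeps the statement inductive. -/
def MinDegreeThreeExcept {V : Type*} (G : SimpleGraph V) (β : V) : Prop :=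
  (G.neighborSet β).Nonempty ∧ ∀ y ≠ β, 3 ≤ (G.neighborSet y).ncard

def ForcesK4Below (n : ℕ) : Prop :=
  ∀ (W : Type u) [Finite W] (H : SimpleGraph W) (β : W), Nat.card W < n →
    MinDegreeThreeExcept H β → HasMinor H K₄

variable {V : Type u} [Finite V] {G : SimpleGraph V}

theorem hasMinor_K4_of_contract (ih : ForcesK4Below.{u} (Nat.card V)) {S : Set V}
    (hS : (G.induce S).Connected) (hS2 : S.Nontrivial) (hout : ∃ s ∈ S, ∃ w ∉ S, G.Adj s w)
    (hdeg : ∀ y ∉ S, ∃ T ⊆ G.neighborSet y, (T ∩ S).Subsingleton ∧ 3 ≤ T.ncard) :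
    HasMinor G K₄ := by
  obtain ⟨r, hr, s, hs, hrs⟩ := hS2
  refine (hasMinor_map G _ (connected_induce_preimage_contractOnto hS hr)).trans
    (ih _ _ (contractOnto S r r) (Finite.card_subtype_lt (x := s) ?_) ⟨?_, fun y hy => ?_⟩)
  · rintro (h | rfl)
    exacts [h hs, hrs rfl]
  · obtain ⟨s', hs', w, hw, hsw⟩ := hout
    refine ⟨contractOnto S r w, ?_, s', w, hsw, ?_, rfl⟩
    · rw [contractOnto_of_mem hr, contractOnto_of_notMem hw, Ne, Subtype.mk.injEq]
      rintro rfl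
      exact hw hr
    · rw [contractOnto_of_mem hr, contractOnto_of_mem hs']
  · have hyS : y.val ∉ S := by
      obtain ⟨y, hy' | rfl⟩ := y
      exacts [hy', absurd (contractOnto_of_mem hr).symm hy]
    obtain ⟨T, hTN, hTS, hT⟩ := hdeg y hyS
    refine hT.trans (ncard_le_ncard_neighborSet_map (contractOnto_injOn hr hTS) fun b hb =>
      ⟨?_, y, contractOnto_of_notMem hyS, hTN hb⟩)
    by_cases hbS : b ∈ S
    · rw [contractOnto_of_mem hbS, ← contractOnto_of_mem hr]
      exact hy.symm
    · rw [contractOnto_of_notMem hbS]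
      rintro rfl
      exact (hTN hb).ne rfl

theorem hasMinor_K4_of_contract_edge (ih : ForcesK4Below.{u} (Nat.card V)) {v x : V}
    (hvx : G.Adj v x) (hroot : ∃ w, w ≠ x ∧ G.Adj v w)
    (hdeg : ∀ y, y ≠ v → y ≠ x → 3 ≤ (G.neighborSet y).ncard)
    (hcommon : ∀ y, G.Adj v y → G.Adj x y → 4 ≤ (G.neighborSet y).ncard) :
    HasMinor G K₄ := by
  refine hasMinor_K4_of_contract ih (induce_pair_connected_of_adj hvx)
    (Set.nontrivial_pair hvx.ne) ?_ fun y hy => ?_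
  · obtain ⟨w, hwx, hvw⟩ := hroot
    exact ⟨v, by simp, w, by simp [hwx, hvw.ne'], hvw⟩
  simp only [Set.mem_insert_iff, Set.mem_singleton_iff, not_or] at hy
  by_cases hboth : G.Adj v y ∧ G.Adj x y
  · refine ⟨G.neighborSet y \ {v}, Set.sdiff_subset, ?_, ?_⟩
    · refine (Set.subsingleton_singleton (a := x)).anti fun w hw => ?_
      simp only [Set.mem_inter_iff, Set.mem_sdiff, Set.mem_insert_iff,
        Set.mem_singleton_iff] at hw ⊢
      tauto
    · rw [Set.ncard_sdiff_singleton_of_mem (s := G.neighborSet y) hboth.1.symm]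
      have := hcommon y hboth.1 hboth.2
      omega
  · refine ⟨G.neighborSet y, subset_rfl, ?_, hdeg y hy.1 hy.2⟩
    rintro a ⟨ha, rfl | rfl⟩ b ⟨hb, rfl | rfl⟩
    exacts [rfl, (hboth ⟨ha.symm, hb.symm⟩).elim, (hboth ⟨hb.symm, ha.symm⟩).elim, rfl]

theorem hasMinor_K4_of_two_exits (ih : ForcesK4Below.{u} (Nat.card V)) {S : Set V}
    {p q x y : V} (hS : (G.induce S).Connected) (hS2 : S.Nontrivial) (hp : p ∈ S) (hx : x ∉ S)
    (hpx : G.Adj p x)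
    (hexit : ∀ s ∈ S, ∀ w ∉ S, G.Adj s w → s = p ∧ w = x ∨ s = q ∧ w = y)
    (hdeg : ∀ w ∉ S, 3 ≤ (G.neighborSet w).ncard) : HasMinor G K₄ := by
  by_cases hxy : x = y
  · subst hxy
    -- both exits lead to `x`, so contract `x` together with `S`
    obtain ⟨z, hxz, hz⟩ : ∃ z ∈ G.neighborSet x, z ∉ insert x S := by
      by_contra! h
      have hsub : G.neighborSet x ⊆ {p, q} := fun z hxz => by
        rcases Set.mem_insert_iff.1 (h z hxz) with rfl | hzS
        · exact absurd hxz (G.irrefl)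
        · rcases hexit z hzS x hx hxz.symm with ⟨rfl, -⟩ | ⟨rfl, -⟩ <;> simp
      have := (Set.ncard_le_ncard hsub).trans (Set.ncard_insert_le p {q})
      have := hdeg x hx
      simp only [Set.ncard_singleton] at *
      omega
    refine hasMinor_K4_of_contract ih (connected_induce_insert hS hp hpx.symm)
      (hS2.mono (Set.subset_insert _ _)) ⟨x, Set.mem_insert _ _, z, hz, hxz⟩ fun w hw => ?_
    rw [Set.mem_insert_iff, not_or] at hw
    refine ⟨G.neighborSet w, subset_rfl,
      (Set.subsingleton_singleton (a := x)).anti fun s ⟨hws, hs⟩ => ?_, hdeg w hw.2⟩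
    rcases Set.mem_insert_iff.1 hs with rfl | hs
    · rfl
    · rcases hexit s hs w hw.2 hws.symm with ⟨-, rfl⟩ | ⟨-, rfl⟩ <;> exact absurd rfl hw.1
  · refine hasMinor_K4_of_contract ih hS hS2 ⟨p, hp, x, hx, hpx⟩ fun w hw =>
      ⟨G.neighborSet w, subset_rfl, fun a ⟨hwa, ha⟩ b ⟨hwb, hb⟩ => ?_, hdeg w hw⟩
    rcases hexit a ha w hw hwa.symm with ⟨rfl, rfl⟩ | ⟨rfl, rfl⟩ <;>
      rcases hexit b hb w hw hwb.symm with ⟨rfl, h⟩ | ⟨rfl, h⟩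
    all_goals first | rfl | exact absurd h hxy | exact absurd h.symm hxy

theorem hasMinor_K4_of_triangle_root (ih : ForcesK4Below.{u} (Nat.card V)) {β p q : V}
    (hβ : G.neighborSet β = {p, q}) (hpq : G.Adj p q)
    (hdeg : ∀ y ≠ β, 3 ≤ (G.neighborSet y).ncard) :
    HasMinor G K₄ := by
  have hβp : G.Adj β p := show p ∈ G.neighborSet β by simp [hβ]
  have hβq : G.Adj β q := show q ∈ G.neighborSet β by simp [hβ]
  have hcommon : ∀ y, G.Adj β y → G.Adj p y → y = q := fun y hβy hpy => by
    have : y ∈ G.neighborSet β := hβy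
    simp only [hβ, Set.mem_insert_iff, Set.mem_singleton_iff] at this
    exact this.resolve_left (by rintro rfl; exact G.irrefl hpy)
  rcases (hdeg q hβq.ne').lt_or_eq with hq | hq
  · exact hasMinor_K4_of_contract_edge ih hβp ⟨q, hpq.ne', hβq⟩ (fun y hy _ => hdeg y hy)
      fun y hβy hpy => hcommon y hβy hpy ▸ hq
  rcases (hdeg p hβp.ne').lt_or_eq with hp | hp
  · refine hasMinor_K4_of_contract_edge ih hβq ⟨p, hpq.ne, hβp⟩ (fun y hy _ => hdeg y hy)
      fun y hβy hqy => ?_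
    have : y ∈ G.neighborSet β := hβy
    simp only [hβ, Set.mem_insert_iff, Set.mem_singleton_iff] at this
    rcases this with rfl | rfl
    exacts [hp, absurd hqy G.irrefl]
  obtain ⟨x, hxβ, hxq, hNp⟩ := Set.exists_eq_insert_insert_of_ncard_eq_three hp.symm
    hβp.symm hpq hβq.ne
  obtain ⟨y, -, -, hNq⟩ := Set.exists_eq_insert_insert_of_ncard_eq_three hq.symm
    hβq.symm hpq.symm hβp.ne
  have hpx : G.Adj p x := show x ∈ G.neighborSet p by simp [hNp]
  -- the only edges leaving `{β, p, q}` are `px` and `qy`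
  refine hasMinor_K4_of_two_exits ih (q := q) (y := y)
    (connected_induce_insert (induce_pair_connected_of_adj hpq) (by simp) hβp)
    ((Set.nontrivial_pair hpq.ne).mono (Set.subset_insert _ _)) (by simp)
    (by simp [hxβ, hxq, hpx.ne']) hpx ?_ fun w hw => hdeg w (by rintro rfl; simp at hw)
  intro s hs w hw hsw
  have hw' : w ∈ G.neighborSet s := hsw
  simp only [Set.mem_insert_iff, Set.mem_singleton_iff, not_or] at hs hw
  rcases hs with rfl | rfl | rfl
  · simp [hβ, hw] at hw'
  · simp [hNp, hw] at hw'
    tauto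
  · simp [hNq, hw] at hw'
    tauto

theorem hasMinor_K4_of_path_neighborSet_of_four_le (ih : ForcesK4Below.{u} (Nat.card V))
    (hG : ∀ y, 3 ≤ (G.neighborSet y).ncard) {v p r m : V} (hv : G.neighborSet v = {p, r, m})
    (hm : G.neighborSet m = {v, p, r}) (hpr : ¬G.Adj p r) (hpr' : p ≠ r)
    (hr : 4 ≤ (G.neighborSet r).ncard) : HasMinor G K₄ := by
  have hvr : G.Adj v r := show r ∈ G.neighborSet v by simp [hv]
  have hmp : G.Adj m p := show p ∈ G.neighborSet m by simp [hm]
  have hmr : G.Adj m r := show r ∈ G.neighborSet m by simp [hm]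
  have hvm : G.Adj v m := show m ∈ G.neighborSet v by simp [hv]
  -- only `r` has two neighbours in `{v, m, p}`, and it can afford to lose one
  refine hasMinor_K4_of_contract ih (S := {v, m, p})
    (connected_induce_insert (induce_pair_connected_of_adj hmp) (by simp) hvm)
    ((Set.nontrivial_pair hmp.ne).mono (Set.subset_insert _ _))
    ⟨v, by simp, r, by simp [hvr.ne', hmr.ne', hpr'.symm], hvr⟩ fun y hy => ?_
  simp only [Set.mem_insert_iff, Set.mem_singleton_iff, not_or] at hy
  by_cases hyr : y = r
  · subst hyr
    refine ⟨G.neighborSet y \ {v}, Set.sdiff_subset,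
      (Set.subsingleton_singleton (a := m)).anti fun w ⟨⟨hyw, hwv⟩, hw⟩ => ?_, ?_⟩
    · simp only [Set.mem_insert_iff, Set.mem_singleton_iff] at hw hwv
      rcases hw with rfl | rfl | rfl
      exacts [absurd rfl hwv, rfl, absurd hyw.symm hpr]
    · rw [Set.ncard_sdiff_singleton_of_mem (s := G.neighborSet y) hvr.symm]
      omega
  refine ⟨G.neighborSet y, subset_rfl,
    (Set.subsingleton_singleton (a := p)).anti fun w ⟨hyw, hw⟩ => ?_, hG y⟩
  have hyw' : G.Adj w y := (show G.Adj y w from hyw).symm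
  simp only [Set.mem_insert_iff, Set.mem_singleton_iff] at hw
  rcases hw with rfl | rfl | rfl
  · have : y ∈ G.neighborSet w := hyw'
    simp [hv] at this
    tauto
  · have : y ∈ G.neighborSet w := hyw'
    simp [hm] at this
    tauto
  · rfl

theorem hasMinor_K4_of_path_neighborSet (ih : ForcesK4Below.{u} (Nat.card V))
    (hG : ∀ y, 3 ≤ (G.neighborSet y).ncard) {v p r m : V} (hv : G.neighborSet v = {p, r, m})
    (hpr : ¬G.Adj p r) (hpm : G.Adj p m) (hrm : G.Adj r m) :
    HasMinor G K₄ := by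
  have hpr' : p ≠ r := by
    rintro rfl
    have h3 := hG v
    rw [hv, Set.insert_eq_of_mem (Set.mem_insert _ _)] at h3
    have := Set.ncard_insert_le p {m}
    rw [Set.ncard_singleton] at this
    omega
  have hvp : G.Adj v p := show p ∈ G.neighborSet v by simp [hv]
  have hvr : G.Adj v r := show r ∈ G.neighborSet v by simp [hv]
  have hvm : G.Adj v m := show m ∈ G.neighborSet v by simp [hv]
  rcases (hG m).lt_or_eq with hm | hm
  · refine hasMinor_K4_of_contract_edge ih hvp ⟨m, hpm.ne', hvm⟩ (fun y _ _ => hG y)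
      fun y hvy hpy => ?_
    have : y ∈ G.neighborSet v := hvy
    simp only [hv, Set.mem_insert_iff, Set.mem_singleton_iff] at this
    rcases this with rfl | rfl | rfl
    exacts [absurd hpy G.irrefl, absurd hpy hpr, hm]
  have hNm : G.neighborSet m = {v, p, r} := by
    refine (Set.eq_of_subset_of_ncard_le ?_ ?_).symm
    · simp [Set.insert_subset_iff, hvm.symm, hpm.symm, hrm.symm]
    · rw [← hm, Set.ncard_eq_three.2 ⟨v, p, r, hvp.ne, hvr.ne, hpr', rfl⟩]
  rcases (hG r).lt_or_eq with hr | hr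
  · exact hasMinor_K4_of_path_neighborSet_of_four_le ih hG hv hNm hpr hpr' hr
  rcases (hG p).lt_or_eq with hp | hp
  · exact hasMinor_K4_of_path_neighborSet_of_four_le ih hG (by rw [hv, Set.insert_comm])
      (by rw [hNm, Set.pair_comm]) (fun h => hpr h.symm) hpr'.symm hp
  obtain ⟨x, hxv, hxm, hNp⟩ := Set.exists_eq_insert_insert_of_ncard_eq_three hp.symm
    hvp.symm hpm hvm.ne
  obtain ⟨y, -, -, hNr⟩ := Set.exists_eq_insert_insert_of_ncard_eq_three hr.symm
    hvr.symm hrm hvm.ne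
  have hpx : G.Adj p x := show x ∈ G.neighborSet p by simp [hNp]
  -- the only edges leaving `{v, p, r, m}` are `px` and `ry`
  refine hasMinor_K4_of_two_exits ih (S := {v, p, r, m}) (q := r) (y := y)
    (connected_induce_insert (connected_induce_insert (induce_pair_connected_of_adj hrm)
      (by simp) hpm) (by simp) hvp)
    ((Set.nontrivial_pair hrm.ne).mono (by simp [Set.subset_def])) (by simp)
    (by simp [hxv, hxm, hpx.ne', show x ≠ r by rintro rfl; exact hpr hpx]) hpx ?_
    fun w _ => hG w
  intro s hs w hw hsw
  have hw' : w ∈ G.neighborSet s := hsw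
  simp only [Set.mem_insert_iff, Set.mem_singleton_iff, not_or] at hs hw
  rcases hs with rfl | rfl | rfl | rfl
  · simp [hv, hw] at hw'
  · simp [hNp, hw] at hw'
    tauto
  · simp [hNr, hw] at hw'
    tauto
  · simp [hNm, hw] at hw'

theorem hasMinor_K4_of_ncard_neighborSet_eq_three (ih : ForcesK4Below.{u} (Nat.card V))
    (hG : ∀ y, 3 ≤ (G.neighborSet y).ncard) {v : V} (hv : (G.neighborSet v).ncard = 3) :
    HasMinor G K₄ := by
  by_cases hcommon : ∀ x ∈ G.neighborSet v, ∃ w, G.Adj v w ∧ G.Adj x w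
  swap
  · push Not at hcommon
    obtain ⟨x, hvx, hx⟩ := hcommon
    obtain ⟨w, hvw, hwx⟩ := Set.exists_ne_of_one_lt_ncard (s := G.neighborSet v) (by omega) x
    exact hasMinor_K4_of_contract_edge ih hvx ⟨w, hwx, hvw⟩ (fun y _ _ => hG y)
      fun y hvy hxy => absurd hxy (hx y hvy)
  have adj_of_not_adj : ∀ {x y z}, G.neighborSet v = {x, y, z} → ¬G.Adj x y → G.Adj x z := by
    intro x y z hN hxy
    obtain ⟨w, hvw, hxw⟩ := hcommon x (by simp [hN])
    have : w ∈ G.neighborSet v := hvw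
    simp only [hN, Set.mem_insert_iff, Set.mem_singleton_iff] at this
    rcases this with rfl | rfl | rfl
    exacts [absurd hxw G.irrefl, absurd hxw hxy, hxw]
  have swap12 : ∀ {x y z}, G.neighborSet v = {x, y, z} → G.neighborSet v = {y, x, z} :=
    fun h => h.trans (Set.insert_comm _ _ _)
  have path : ∀ {p r m}, G.neighborSet v = {p, r, m} → ¬G.Adj p r →
      HasMinor G K₄ := fun hN hpr =>
    hasMinor_K4_of_path_neighborSet ih hG hN hpr (adj_of_not_adj hN hpr)
      (adj_of_not_adj (swap12 hN) fun h => hpr h.symm)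
  obtain ⟨a, b, c, hab, hac, hbc, hN⟩ := Set.ncard_eq_three.1 hv
  by_cases hab' : G.Adj a b
  swap
  · exact path hN hab'
  by_cases hac' : G.Adj a c
  swap
  · exact path (hN.trans (by rw [Set.pair_comm])) hac'
  by_cases hbc' : G.Adj b c
  swap
  · exact path (hN.trans (by rw [Set.insert_comm, Set.pair_comm])) hbc'
  have hva : G.Adj v a := show a ∈ G.neighborSet v by simp [hN]
  have hvb : G.Adj v b := show b ∈ G.neighborSet v by simp [hN]
  have hvc : G.Adj v c := show c ∈ G.neighborSet v by simp [hN]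
  refine hasMinor_top_of_pairwise_adj ![v, a, b, c] fun i j hij => ?_
  fin_cases i <;> fin_cases j <;> first
    | exact absurd rfl hij
    | simp [hva, hvb, hvc, hab', hac', hbc', hva.symm, hvb.symm, hvc.symm, hab'.symm, hac'.symm,
        hbc'.symm]

theorem MinDegreeThreeExcept.hasMinor_K4_of_forcesK4Below {β : V} (h : MinDegreeThreeExcept G β)
    (ih : ForcesK4Below.{u} (Nat.card V)) : HasMinor G K₄ := by
  obtain ⟨⟨u, hu⟩, hdeg⟩ := h
  have hβu : G.Adj β u := hu
  by_cases hβ3 : 3 ≤ (G.neighborSet β).ncard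
  · have hG : ∀ y, 3 ≤ (G.neighborSet y).ncard := fun y => by
      rcases eq_or_ne y β with rfl | hy
      exacts [hβ3, hdeg y hy]
    by_cases h3 : ∃ v, (G.neighborSet v).ncard = 3
    · obtain ⟨v, hv⟩ := h3
      exact hasMinor_K4_of_ncard_neighborSet_eq_three ih hG hv
    push Not at h3
    obtain ⟨w, hβw, hwu⟩ := Set.exists_ne_of_one_lt_ncard (s := G.neighborSet β) (by omega) u
    exact hasMinor_K4_of_contract_edge ih hβu ⟨w, hwu, hβw⟩ (fun y _ _ => hG y)
      fun y _ _ => (hG y).lt_of_ne (h3 y).symm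
  have hpos : 0 < (G.neighborSet β).ncard := (Set.ncard_pos (Set.toFinite _)).2 ⟨u, hβu⟩
  rcases (by omega : (G.neighborSet β).ncard = 1 ∨ (G.neighborSet β).ncard = 2) with h1 | h2
  · obtain ⟨u', hN⟩ := Set.ncard_eq_one.1 h1
    obtain ⟨w, huw, hwβ⟩ := Set.exists_ne_of_one_lt_ncard (s := G.neighborSet u)
      (by have := hdeg u hβu.ne'; omega) β
    refine hasMinor_K4_of_contract_edge ih hβu.symm ⟨w, hwβ, huw⟩ (fun y _ hy => hdeg y hy)
      fun y huy hβy => ?_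
    have hu : u ∈ G.neighborSet β := hβu
    have hy : y ∈ G.neighborSet β := hβy
    rw [hN, Set.mem_singleton_iff] at hu hy
    exact absurd (hy.trans hu.symm ▸ huy) G.irrefl
  · obtain ⟨p, q, hpq, hN⟩ := Set.ncard_eq_two.1 h2
    by_cases hadj : G.Adj p q
    · exact hasMinor_K4_of_triangle_root ih hN hadj hdeg
    refine hasMinor_K4_of_contract_edge ih (show p ∈ G.neighborSet β by simp [hN])
      ⟨q, hpq.symm, show q ∈ G.neighborSet β by simp [hN]⟩ (fun y hy _ => hdeg y hy)
      fun y hβy hpy => ?_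
    have hy : y ∈ G.neighborSet β := hβy
    simp only [hN, Set.mem_insert_iff, Set.mem_singleton_iff] at hy
    rcases hy with rfl | rfl
    exacts [absurd hpy G.irrefl, absurd hpy hadj]

theorem forcesK4Below : ∀ n, ForcesK4Below.{u} n
  | 0 => fun _ _ _ _ h => absurd h (Nat.not_lt_zero _)
  | n + 1 => fun _ _ _ _ hW h =>
    h.hasMinor_K4_of_forcesK4Below fun _ _ _ _ hW' => forcesK4Below n _ _ _ (by omega)

theorem MinDegreeThreeExcept.hasMinor_K4 {β : V} (h : MinDegreeThreeExcept G β) :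
    HasMinor G K₄ :=
  forcesK4Below _ V G β (Nat.lt_succ_self _) h

end MinDegreeThree

theorem SimpleGraph.ncard_neighborSet_induce {V : Type*} (G : SimpleGraph V) (s : Set V)
    (v : s) : ((G.induce s).neighborSet v).ncard = (G.neighborSet v ∩ s).ncard := by
  rw [← Set.ncard_image_of_injective _ Subtype.val_injective]
  congr 1
  ext w
  simp [and_comm]

section Degeneracy

variable {V : Type*} [Finite V] {G : SimpleGraph V}

theorem exists_ncard_neighborSet_le_two [Nonempty V]
    (hK4 : ¬HasMinor G K₄) : ∃ v, (G.neighborSet v).ncard ≤ 2 := by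
  by_contra! h
  obtain ⟨β⟩ := ‹Nonempty V›
  exact hK4 (MinDegreeThreeExcept.hasMinor_K4 (β := β)
    ⟨Set.nonempty_of_ncard_ne_zero (by have := h β; omega), fun y _ => h y⟩)

theorem exists_ncard_neighborSet_inter_le_two (hK4 : ¬HasMinor G K₄)
    (s : Set V) (hs : s.Nonempty) : ∃ v ∈ s, (G.neighborSet v ∩ s).ncard ≤ 2 := by
  have : Nonempty s := hs.to_subtype
  obtain ⟨⟨v, hv⟩, h⟩ := exists_ncard_neighborSet_le_two (G := G.induce s)
    fun h => hK4 ((hasMinor_induce G s).trans h)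
  exact ⟨v, hv, G.ncard_neighborSet_induce s ⟨v, hv⟩ ▸ h⟩

end Degeneracy

section Coloring

theorem ncard_Mset (n : ℕ) : (Mset n).ncard = n := by
  obtain ⟨k, rfl | rfl⟩ := Nat.even_or_odd' n
  · have h : Mset (2 * k) = Set.Icc (-(k : ℤ)) k \ {0} := by
      ext x
      simp only [Mset, Set.mem_ofPred_eq, Set.mem_sdiff, Set.mem_Icc, Set.mem_singleton_iff]
      omega
    rw [h, Set.ncard_sdiff_singleton_of_mem (by simp), ← Finset.coe_Icc, Set.ncard_coe_finset,
      Int.card_Icc]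
    omega
  · have h : Mset (2 * k + 1) = Set.Icc (-(k : ℤ)) k := by
      ext x
      simp only [Mset, Set.mem_ofPred_eq, Set.mem_Icc]
      omega
    rw [h, ← Finset.coe_Icc, Set.ncard_coe_finset, Int.card_Icc]
    omega

theorem IsSignature.eq_mul_iff {V : Type*} {σ : V → V → ℤ} (hσ : IsSignature σ) (u v : V)
    (a b : ℤ) : a = σ u v * b ↔ b = σ v u * a := by
  rw [hσ.1 v u]
  rcases hσ.2 u v with h | h <;> rw [h] <;> omega

variable {V : Type*} [Finite V]

theorem exists_signedColoring_of_degenerate (G : SimpleGraph V) {σ : V → V → ℤ}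
    (hσ : IsSignature σ) {n : ℕ}
    (hdeg : ∀ s : Set V, s.Nonempty → ∃ v ∈ s, (G.neighborSet v ∩ s).ncard < n)
    (s : Set V) :
    ∃ φ : V → ℤ, (∀ v ∈ s, φ v ∈ Mset n) ∧
      ∀ u ∈ s, ∀ v ∈ s, G.Adj u v → φ u ≠ σ u v * φ v := by
  classical
  induction hk : s.ncard using Nat.strong_induction_on generalizing s with
  | _ k ih =>
  rcases s.eq_empty_or_nonempty with rfl | hs
  · exact ⟨0, by simp, by simp⟩
  obtain ⟨v, hv, hvdeg⟩ := hdeg s hs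
  obtain ⟨φ, hφM, hφ⟩ := ih _ (hk ▸ Set.ncard_sdiff_singleton_lt_of_mem hv) (s \ {v}) rfl
  have hfree : ((fun w => σ v w * φ w) '' (G.neighborSet v ∩ s)).ncard < (Mset n).ncard :=
    (Set.ncard_image_le (Set.toFinite _)).trans_lt (by rwa [ncard_Mset])
  obtain ⟨c, hcM, hcfree⟩ := Set.exists_mem_notMem_of_ncard_lt_ncard hfree
  have hc : ∀ w ∈ s, G.Adj v w → c ≠ σ v w * φ w := fun w hw hvw h =>
    hcfree ⟨w, ⟨hvw, hw⟩, h.symm⟩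
  refine ⟨Function.update φ v c, fun w hw => ?_, fun a ha b hb hab => ?_⟩
  · rcases eq_or_ne w v with rfl | hwv
    · simpa using hcM
    · simpa [hwv] using hφM w ⟨hw, hwv⟩
  rcases eq_or_ne a v with rfl | hav
  · simpa [hab.ne'] using hc b hb hab
  rcases eq_or_ne b v with rfl | hbv
  · rw [Ne, hσ.eq_mul_iff]
    simpa [hav] using hc a ha hab.symm
  · simpa [hav, hbv] using hφ a ⟨ha, hav⟩ b ⟨hb, hbv⟩ hab

theorem signedColorable_of_degenerate (G : SimpleGraph V) {σ : V → V → ℤ}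
    (hσ : IsSignature σ) {n : ℕ}
    (hdeg : ∀ s : Set V, s.Nonempty → ∃ v ∈ s, (G.neighborSet v ∩ s).ncard < n) :
    SignedColorable G σ n := by
  obtain ⟨φ, hφM, hφ⟩ := exists_signedColoring_of_degenerate G hσ hdeg Set.univ
  exact ⟨φ, fun u v h => hφ u trivial v trivial h, fun v => hφM v trivial⟩

end Coloring

/-- Every simple signed graph whose underlying graph is `K₄`-minor-free satisfies `χ(G) ≤ 3`. -/
theorem signed_chromatic_le_three_of_K4_minor_free
    {V : Type*} [Fintype V] (G : SimpleGraph V) (σ : V → V → ℤ) (hσ : IsSignature σ)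
    (hK4 : ¬ HasMinor G (⊤ : SimpleGraph (Fin 4))) :
    signedChromaticNumber G σ ≤ 3 :=
  Nat.sInf_le <| signedColorable_of_degenerate G hσ fun s hs =>
    (exists_ncard_neighborSet_inter_le_two hK4 s hs).imp fun _ ⟨hv, h⟩ =>
      ⟨hv, Nat.lt_succ_of_le h⟩
end

section
/- If the edge set of a simple signed graph G is the union of two forests, then χ(G) ≤ 4. -/
open SimpleGraph Finset

lemma induce_isAcyclic' {V : Type*} {F : SimpleGraph V} (hF : F.IsAcyclic) (s : Set V) :
    (F.induce s).IsAcyclic := by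
  intro v c hc
  exact hF (c.map (Embedding.induce s).toHom) (hc.map Subtype.val_injective)

lemma exists_degree_le_one' {V : Type*} [Fintype V] [Nonempty V] [DecidableEq V]
    {F : SimpleGraph V} [DecidableRel F.Adj] (hF : F.IsAcyclic) : ∃ v, F.degree v ≤ 1 := by
  by_contra hcon
  push_neg at hcon
  set S : Set ℕ := {n | ∃ (u v : V) (p : F.Walk u v), p.IsPath ∧ p.length = n} with hS
  have hS0 : 0 ∈ S := ⟨Classical.arbitrary V, Classical.arbitrary V, Walk.nil, Walk.IsPath.nil, rfl⟩
  have hbdd : BddAbove S := ⟨Fintype.card V, by rintro n ⟨u, v, p, hp, rfl⟩; exact hp.length_lt.le⟩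
  obtain ⟨u, v, p, hp, hlen⟩ := Nat.sSup_mem ⟨0, hS0⟩ hbdd
  set q := p.reverse with hqdef
  have hq : q.IsPath := hp.reverse
  have hql : q.length = sSup S := by rw [hqdef, Walk.length_reverse, hlen]
  -- all neighbours of v lie on q
  have hallnbr : ∀ w, F.Adj v w → w ∈ q.support := by
    intro w hw
    by_contra hws
    have hp2 : (Walk.cons hw.symm q).IsPath := hq.cons hws
    have : (Walk.cons hw.symm q).length ∈ S := ⟨w, u, _, hp2, rfl⟩
    have hle := le_csSup hbdd this
    simp [Walk.length_cons, hql] at hle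
  clear_value q
  clear hqdef
  cases q with
  | nil =>
    obtain ⟨w, hw⟩ := (F.degree_pos_iff_exists_adj u).mp (by have := hcon u; omega)
    have := hallnbr w hw
    simp only [Walk.support_nil, List.mem_singleton] at this
    exact F.ne_of_adj hw this.symm
  | cons h q' =>
    rename_i x
    obtain ⟨w, hwmem, hwx⟩ :=
      Finset.exists_mem_ne (hcon v) x
    rw [mem_neighborFinset] at hwmem
    have hwv : w ≠ v := fun e => F.ne_of_adj hwmem (e ▸ rfl) |>.elim
    have hwsup : w ∈ q'.support := by
      have := hallnbr w hwmem
      simp only [Walk.support_cons, List.mem_cons] at this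
      tauto
    rw [Walk.cons_isPath_iff] at hq
    set t := q'.takeUntil w hwsup with htdef
    have ht : t.IsPath := hq.1.takeUntil hwsup
    have hvt : v ∉ t.support := fun hmem => hq.2 (Walk.support_takeUntil_subset _ hwsup hmem)
    have hT : (Walk.cons h t).IsPath := ht.cons hvt
    have hedge : s(w, v) ∉ (Walk.cons h t).edges := by
      rw [Walk.edges_cons, List.mem_cons]
      rintro (he | he)
      · rw [Sym2.eq_iff] at he
        rcases he with ⟨h1, h2⟩ | ⟨h1, h2⟩
        · exact hwv (h2 ▸ h1)
        · exact hwx h1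
      · exact hvt (Walk.snd_mem_support_of_mem_edges t he)
    exact hF _ (Path.cons_isCycle ⟨Walk.cons h t, hT⟩ hwmem.symm hedge)

universe u

lemma sum_degree_acyclic : ∀ (n : ℕ) {V : Type u} [Fintype V] [Nonempty V]
    (F : SimpleGraph V) [DecidableRel F.Adj], Fintype.card V ≤ n → F.IsAcyclic →
    (∑ v, F.degree v) + 2 ≤ 2 * Fintype.card V := by
  intro n
  induction n with
  | zero => intro V _ _ F _ hc _; simp [Nat.le_zero, Fintype.card_eq_zero_iff] at hc
  | succ n ih =>
    intro V _ _ F _ hc hF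
    classical
    obtain ⟨v₀, hv₀⟩ := exists_degree_le_one' hF
    set s : Set V := {u | u ≠ v₀} with hsdef
    have key : ∀ (u : V) (hu : u ∈ s),
        (F.induce s).degree ⟨u, hu⟩ = ((F.neighborFinset u).erase v₀).card := by
      intro u hu
      rw [← card_neighborFinset_eq_degree,
        ← Finset.card_image_of_injective _ (Subtype.val_injective)]
      congr 1
      ext w
      simp only [Finset.mem_image, mem_neighborFinset, Finset.mem_erase]
      constructor
      · rintro ⟨a, ha, rfl⟩
        exact ⟨a.2, ha⟩
      · rintro ⟨hw, ha⟩
        exact ⟨⟨w, hw⟩, ha, rfl⟩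
    have hdeg : ∀ u : V, F.degree u =
        ((F.neighborFinset u).erase v₀).card + (if F.Adj u v₀ then 1 else 0) := by
      intro u
      by_cases h : F.Adj u v₀
      · rw [if_pos h, Finset.card_erase_add_one (by rwa [mem_neighborFinset])]
        exact (card_neighborFinset_eq_degree _ _).symm
      · rw [if_neg h, Finset.erase_eq_of_notMem (by rwa [mem_neighborFinset]), add_zero]
        exact (card_neighborFinset_eq_degree _ _).symm
    have hsum1 : F.degree v₀ + ∑ u ∈ Finset.univ.erase v₀, F.degree u = ∑ u, F.degree u :=
      Finset.add_sum_erase Finset.univ (fun u => F.degree u) (Finset.mem_univ v₀)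
    have hsum2 : ∑ u ∈ Finset.univ.erase v₀, (if F.Adj u v₀ then 1 else 0) = F.degree v₀ := by
      rw [Finset.sum_erase _ (by simp)]
      have hf : Finset.univ.filter (fun u => F.Adj u v₀) = F.neighborFinset v₀ := by
        ext w; simp [mem_neighborFinset, adj_comm]
      rw [Finset.sum_boole, hf, card_neighborFinset_eq_degree, Nat.cast_id]
    have hsum3 : ∑ u ∈ Finset.univ.erase v₀, ((F.neighborFinset u).erase v₀).card
        = ∑ x : s, (F.induce s).degree x := by
      rw [Finset.sum_subtype (p := fun u => u ∈ s) (Finset.univ.erase v₀)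
        (fun x => by simp [hsdef]) (fun u => ((F.neighborFinset u).erase v₀).card)]
      exact Finset.sum_congr rfl fun x _ => (key x.1 x.2).symm
    have hcards : Fintype.card s = Fintype.card V - 1 := by
      rw [Fintype.card_subtype]
      have : Finset.univ.filter (fun u => u ∈ s) = Finset.univ.erase v₀ := by
        ext w; simp [hsdef]
      rw [this, Finset.card_erase_of_mem (Finset.mem_univ _), Finset.card_univ]
    have hcard1 : 1 ≤ Fintype.card V := Fintype.card_pos
    by_cases hne : Nonempty s
    · have hind := ih (F.induce s) (by omega) (induce_isAcyclic' hF s)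
      have hsplit : ∑ u ∈ Finset.univ.erase v₀, F.degree u
          = (∑ x : s, (F.induce s).degree x) + F.degree v₀ := by
        rw [← hsum3, ← hsum2, ← Finset.sum_add_distrib]
        exact Finset.sum_congr rfl fun u _ => hdeg u
      have h2 : 2 ≤ Fintype.card V := by
        obtain ⟨⟨w, hw⟩⟩ := hne
        have : w ≠ v₀ := hw
        exact Fintype.one_lt_card_iff_nontrivial.mpr ⟨⟨w, v₀, this⟩⟩
      omega
    · -- card V = 1, single vertex v₀, degree 0
      have hall : ∀ u : V, u = v₀ := by
        intro u; by_contra hu; exact hne ⟨⟨u, hu⟩⟩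
      have hdeg0 : F.degree v₀ = 0 := by
        rw [← card_neighborFinset_eq_degree, Finset.card_eq_zero]
        ext w
        simp only [mem_neighborFinset, Finset.notMem_empty, iff_false]
        intro hadj
        exact F.ne_of_adj hadj ((hall v₀).symm ▸ (hall w).symm ▸ rfl)
      have hcV : Fintype.card V = 1 := by
        refine le_antisymm ?_ hcard1
        refine Fintype.card_le_one_iff.mpr fun a b => (hall a).trans (hall b).symm
      have : ∑ u, F.degree u = F.degree v₀ := by
        rw [← hsum1]
        have : Finset.univ.erase v₀ = ∅ := by
          ext w; simp [hall w]
        rw [this, Finset.sum_empty, add_zero]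
      omega

lemma exists_degree_le_three' {V : Type u} [Fintype V] [Nonempty V]
    {G F₁ F₂ : SimpleGraph V} [DecidableRel G.Adj]
    (h₁ : F₁.IsAcyclic) (h₂ : F₂.IsAcyclic) (hG : G = F₁ ⊔ F₂) :
    ∃ v, G.degree v ≤ 3 := by
  classical
  by_contra hcon
  push_neg at hcon
  have hdle : ∀ v, G.degree v ≤ F₁.degree v + F₂.degree v := by
    intro v
    have hnb : G.neighborFinset v = F₁.neighborFinset v ∪ F₂.neighborFinset v := by
      ext w; simp [mem_neighborFinset, hG]
    rw [← card_neighborFinset_eq_degree, hnb, ← card_neighborFinset_eq_degree,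
      ← card_neighborFinset_eq_degree]
    exact Finset.card_union_le _ _
  have hs1 := sum_degree_acyclic (Fintype.card V) F₁ le_rfl h₁
  have hs2 := sum_degree_acyclic (Fintype.card V) F₂ le_rfl h₂
  have hlow : 4 * Fintype.card V ≤ ∑ v, G.degree v := by
    calc 4 * Fintype.card V = ∑ _v : V, 4 := by
          rw [Finset.sum_const, Finset.card_univ, smul_eq_mul, mul_comm]
      _ ≤ ∑ v, G.degree v := Finset.sum_le_sum fun v _ => hcon v
  have hup : ∑ v, G.degree v ≤ (∑ v, F₁.degree v) + ∑ v, F₂.degree v := by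
    rw [← Finset.sum_add_distrib]
    exact Finset.sum_le_sum fun v _ => hdle v
  have hpos : 1 ≤ Fintype.card V := Fintype.card_pos
  omega

lemma main_aux : ∀ (n : ℕ) {V : Type u} [Fintype V] (G : SimpleGraph V) (σ : V → V → ℤ),
    IsSignature σ → Fintype.card V ≤ n →
    (∃ F₁ F₂ : SimpleGraph V, F₁.IsAcyclic ∧ F₂.IsAcyclic ∧ G = F₁ ⊔ F₂) →
    ∃ φ : V → ℤ, IsProperSignedColoring G σ φ ∧ ∀ v, φ v ∈ ({1, -1, 2, -2} : Finset ℤ) := by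
  intro n
  induction n with
  | zero =>
    intro V _ G σ hσ hc _
    rw [Nat.le_zero, Fintype.card_eq_zero_iff] at hc
    exact ⟨fun _ => 1, fun u => (hc.false u).elim, fun v => (hc.false v).elim⟩
  | succ n ih =>
    intro V _ G σ hσ hc hforests
    classical
    by_cases hne : Nonempty V
    case neg =>
      have : IsEmpty V := not_nonempty_iff.mp hne
      exact ⟨fun _ => 1, fun u => (this.false u).elim, fun v => (this.false v).elim⟩
    obtain ⟨F₁, F₂, h₁, h₂, hG⟩ := hforests
    obtain ⟨v₀, hv₀⟩ := exists_degree_le_three' h₁ h₂ hG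
    set s : Set V := {u | u ≠ v₀} with hsdef
    have hcards : Fintype.card s ≤ n := by
      rw [Fintype.card_subtype]
      have : Finset.univ.filter (fun u => u ∈ s) = Finset.univ.erase v₀ := by
        ext w; simp [hsdef]
      rw [this, Finset.card_erase_of_mem (Finset.mem_univ _), Finset.card_univ]
      omega
    have hind : G.induce s = F₁.induce s ⊔ F₂.induce s := by
      ext a b; simp [hG]
    obtain ⟨φ', hφ'p, hφ'c⟩ := ih (G.induce s) (fun a b => σ a.1 b.1)
      ⟨fun a b => hσ.1 a.1 b.1, fun a b => hσ.2 a.1 b.1⟩ hcards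
      ⟨F₁.induce s, F₂.induce s, induce_isAcyclic' h₁ s, induce_isAcyclic' h₂ s, hind⟩
    set φ₀ : V → ℤ := fun u => if h : u = v₀ then 0 else φ' ⟨u, h⟩ with hφ₀
    set Forb : Finset ℤ := (G.neighborFinset v₀).image (fun u => σ v₀ u * φ₀ u) with hForb
    have hForbcard : Forb.card ≤ 3 :=
      le_trans (Finset.card_image_le) hv₀
    have hex : (({1, -1, 2, -2} : Finset ℤ) \ Forb).Nonempty := by
      rw [← Finset.card_pos]
      have h4 : ({1, -1, 2, -2} : Finset ℤ).card = 4 := by decide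
      have := Finset.le_card_sdiff Forb ({1, -1, 2, -2} : Finset ℤ)
      omega
    obtain ⟨c, hc'⟩ := hex
    rw [Finset.mem_sdiff] at hc'
    set φ : V → ℤ := fun u => if h : u = v₀ then c else φ' ⟨u, h⟩ with hφ
    have hφeq : ∀ (u : V) (hu : u ≠ v₀), φ u = φ₀ u := by
      intro u hu; simp [hφ, hφ₀, dif_neg hu]
    have hσsq : ∀ u v : V, σ u v * σ v u = 1 := by
      intro u v
      rw [hσ.1 u v]
      rcases hσ.2 v u with h | h <;> rw [h] <;> norm_num
    refine ⟨φ, ?_, ?_⟩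
    · intro u v huv
      by_cases hu : u = v₀ <;> by_cases hv : v = v₀
      · exact absurd (hu ▸ hv ▸ huv) (G.irrefl)
      · have hmem : σ v₀ v * φ₀ v ∈ Forb :=
          Finset.mem_image.mpr ⟨v, (mem_neighborFinset _ _ _).mpr (hu ▸ huv), rfl⟩
        rw [show φ u = c from dif_pos hu, hφeq v hv, hu]
        intro heq
        exact hc'.2 (heq ▸ hmem)
      · have hmem : σ v₀ u * φ₀ u ∈ Forb :=
          Finset.mem_image.mpr ⟨u, (mem_neighborFinset _ _ _).mpr (hv ▸ huv.symm), rfl⟩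
        rw [hφeq u hu, show φ v = c from dif_pos hv, hv]
        intro heq
        apply hc'.2
        have : σ v₀ u * φ₀ u = c := by
          rw [heq, ← mul_assoc, hσ.1 v₀ u]
          rcases hσ.2 u v₀ with hh | hh <;> rw [hh] <;> ring
        exact this ▸ hmem
      · have hadj : (G.induce s).Adj ⟨u, hu⟩ ⟨v, hv⟩ := huv
        have := hφ'p ⟨u, hu⟩ ⟨v, hv⟩ hadj
        rw [hφeq u hu, hφeq v hv]
        simpa [hφ₀, dif_neg hu, dif_neg hv] using this
    · intro v
      by_cases hv : v = v₀
      · rw [hφ]; simpa [dif_pos hv, hv] using hc'.1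
      · rw [hφ]; simpa [dif_neg hv] using hφ'c ⟨v, hv⟩


/-- If the edge set of a simple signed graph is the union of two forests, then `χ(G) ≤ 4`. -/
theorem signed_chromatic_le_four_of_union_of_two_forests
    {V : Type*} [Fintype V] (G : SimpleGraph V) (σ : V → V → ℤ) (hσ : IsSignature σ)
    (h : ∃ F₁ F₂ : SimpleGraph V, F₁.IsAcyclic ∧ F₂.IsAcyclic ∧ G = F₁ ⊔ F₂) :
    signedChromaticNumber G σ ≤ 4 := by
  apply Nat.sInf_le
  obtain ⟨φ, hp, hcol⟩ := main_aux (Fintype.card V) G σ hσ le_rfl h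
  refine ⟨φ, hp, fun v => ?_⟩
  have := hcol v
  simp only [Finset.mem_insert, Finset.mem_singleton] at this
  rcases this with h | h | h | h <;> simp [Mset, h]
end

section
/- If the vertex set of a simple signed graph G can be partitioned into k sets each inducing a forest (i.e., the vertex arboricity of the underlying graph is at most k), then χ(G) ≤ 2k. -/
/-- Product of `-σ` along a walk. -/
def walkProd {V : Type*} {G : SimpleGraph V} (σ : V → V → ℤ) :
    ∀ {u v : V}, G.Walk u v → ℤ
  | _, _, SimpleGraph.Walk.nil => 1
  | u, _, SimpleGraph.Walk.cons (v := x) _ p => (-σ u x) * walkProd σ p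

@[simp] lemma walkProd_nil {V : Type*} {G : SimpleGraph V} (σ : V → V → ℤ) {u : V} :
    walkProd σ (SimpleGraph.Walk.nil : G.Walk u u) = 1 := rfl

@[simp] lemma walkProd_cons {V : Type*} {G : SimpleGraph V} (σ : V → V → ℤ)
    {u x w : V} (h : G.Adj u x) (p : G.Walk x w) :
    walkProd σ (SimpleGraph.Walk.cons h p) = (-σ u x) * walkProd σ p := rfl

lemma walkProd_append {V : Type*} {G : SimpleGraph V} (σ : V → V → ℤ)
    {u v w : V} (p : G.Walk u v) (q : G.Walk v w) :
    walkProd σ (p.append q) = walkProd σ p * walkProd σ q := by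
  induction p with
  | nil => simp
  | cons h p ih => simp [ih, mul_assoc]

lemma walkProd_copy {V : Type*} {G : SimpleGraph V} (σ : V → V → ℤ)
    {u v u' v' : V} (p : G.Walk u v) (h1 : u = u') (h2 : v = v') :
    walkProd σ (p.copy h1 h2) = walkProd σ p := by subst h1; subst h2; rfl

lemma walkProd_units {V : Type*} {G : SimpleGraph V} (σ : V → V → ℤ)
    (hσ : ∀ a b, σ a b = 1 ∨ σ a b = -1) {u v : V} (p : G.Walk u v) :
    walkProd σ p = 1 ∨ walkProd σ p = -1 := by
  induction p with
  | nil => left; rfl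
  | cons h p ih =>
    rename_i a b c
    rcases hσ a b with h1 | h1 <;> rcases ih with h2 | h2 <;>
      simp [h1, h2]

lemma walkProd_key {V : Type*} [DecidableEq V] {G : SimpleGraph V} (hG : G.IsAcyclic)
    (σ : V → V → ℤ) (hsym : ∀ a b, σ a b = σ b a) (hval : ∀ a b, σ a b = 1 ∨ σ a b = -1)
    {u v r : V} (huv : G.Adj u v)
    (p : G.Walk u r) (q : G.Walk v r) (hp : p.IsPath) (hq : q.IsPath) :
    walkProd σ p = -σ u v * walkProd σ q := by
  have huniq := SimpleGraph.isAcyclic_iff_path_unique.mp hG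
  have hσsq : σ u v * σ u v = 1 := by rcases hval u v with h1 | h1 <;> simp [h1]
  by_cases hu : u ∈ q.support
  · have hq' := (q.take_spec hu).symm
    have htake : q.takeUntil u hu = SimpleGraph.Walk.cons huv.symm SimpleGraph.Walk.nil := by
      have h1 : (⟨q.takeUntil u hu, hq.takeUntil hu⟩ : G.Path v u)
          = SimpleGraph.Path.singleton huv.symm := huniq _ _
      simpa [SimpleGraph.Path.singleton] using congrArg Subtype.val h1
    have hdrop : q.dropUntil u hu = p := by
      have h1 : (⟨q.dropUntil u hu, hq.dropUntil hu⟩ : G.Path u r) = ⟨p, hp⟩ := huniq _ _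
      simpa using congrArg Subtype.val h1
    rw [hq', walkProd_append, htake, hdrop, walkProd_cons, walkProd_nil, hsym v u]
    rcases hval u v with h4 | h4 <;> rw [h4] <;> ring
  · have hcons : (SimpleGraph.Walk.cons huv q).IsPath := hq.cons hu
    have h1 : (⟨p, hp⟩ : G.Path u r) = ⟨SimpleGraph.Walk.cons huv q, hcons⟩ := huniq _ _
    have h2 : p = SimpleGraph.Walk.cons huv q := congrArg Subtype.val h1
    rw [h2, walkProd_cons]

lemma forest_sign {W : Type*} {H : SimpleGraph W} (hH : H.IsAcyclic)
    (σ : W → W → ℤ) (hsym : ∀ a b, σ a b = σ b a) (hval : ∀ a b, σ a b = 1 ∨ σ a b = -1) :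
    ∃ s : W → ℤ, (∀ v, s v = 1 ∨ s v = -1) ∧ ∀ u v, H.Adj u v → s u = -σ u v * s v := by
  classical
  have hreach : ∀ v : W, H.Reachable v (H.connectedComponentMk v).out := fun v =>
    (SimpleGraph.ConnectedComponent.exact ((H.connectedComponentMk v).out_eq)).symm
  let pt : ∀ v : W, H.Walk v (H.connectedComponentMk v).out := fun v =>
    ((hreach v).some.toPath).1
  have hpt : ∀ v, (pt v).IsPath := fun v => ((hreach v).some.toPath).2
  refine ⟨fun v => walkProd σ (pt v), fun v => walkProd_units σ hval _, ?_⟩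
  intro u v huv
  have hr : (H.connectedComponentMk v).out = (H.connectedComponentMk u).out := by
    rw [SimpleGraph.ConnectedComponent.sound huv.reachable]
  have hkey := walkProd_key hH σ hsym hval huv (pt u) ((pt v).copy rfl hr)
    (hpt u) (by simpa using hpt v)
  rwa [walkProd_copy] at hkey

/-- If the vertex set of a simple signed graph can be partitioned into `k` parts each inducing
a forest (vertex arboricity at most `k`), then `χ(G) ≤ 2k`. -/
theorem signed_chromatic_le_of_vertex_arboricity
    {V : Type*} [Fintype V] (G : SimpleGraph V) (σ : V → V → ℤ) (hσ : IsSignature σ)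
    (k : ℕ) (h : ∃ P : V → Fin k, ∀ i, (G.induce (P ⁻¹' {i})).IsAcyclic) :
    signedChromaticNumber G σ ≤ 2 * k := by
  classical
  obtain ⟨hsym, hval⟩ := hσ
  obtain ⟨P, hP⟩ := h
  -- signs on each part
  have hs : ∀ i : Fin k, ∃ s : (P ⁻¹' {i} : Set V) → ℤ,
      (∀ v, s v = 1 ∨ s v = -1) ∧
      ∀ u v, (G.induce (P ⁻¹' {i})).Adj u v → s u = -σ u.1 v.1 * s v := by
    intro i
    exact forest_sign (hP i) (fun a b => σ a.1 b.1) (fun a b => hsym a.1 b.1)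
      (fun a b => hval a.1 b.1)
  choose s hs1 hs2 using hs
  have hmem : ∀ v : V, v ∈ (P ⁻¹' {P v} : Set V) := fun v => rfl
  set t : V → ℤ := fun v => s (P v) ⟨v, hmem v⟩ with ht
  have htval : ∀ v, t v = 1 ∨ t v = -1 := fun v => hs1 (P v) _
  have hcast : ∀ (v : V) (i : Fin k) (hi : P v = i),
      s i ⟨v, hi⟩ = t v := by
    intro v i hi
    subst hi; rfl
  have htadj : ∀ u v, G.Adj u v → P u = P v → t u = -σ u v * t v := by
    intro u v huv hPuv
    have hu : u ∈ (P ⁻¹' {P u} : Set V) := rfl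
    have hv : v ∈ (P ⁻¹' {P u} : Set V) := hPuv.symm
    have hadj : (G.induce (P ⁻¹' {P u})).Adj ⟨u, hu⟩ ⟨v, hv⟩ := by
      simpa using huv
    have := hs2 (P u) ⟨u, hu⟩ ⟨v, hv⟩ hadj
    rwa [hcast u (P u) hu, hcast v (P u) hv] at this
  set φ : V → ℤ := fun v => t v * ((P v : ℤ) + 1) with hφ
  have hproper : IsProperSignedColoring G σ φ := by
    intro u v huv heq
    by_cases hPuv : P u = P v
    · have h1 := htadj u v huv hPuv
      have h2 : ((P u : ℤ)) = ((P v : ℤ)) := by exact_mod_cast congrArg Fin.val hPuv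
      rcases htval v with h3 | h3 <;> rcases hval u v with h4 | h4 <;>
        simp only [hφ, h1, h3, h4, h2] at heq <;> omega
    · have h2 : ((P u : ℤ)) ≠ ((P v : ℤ)) := by
        intro hc
        exact hPuv (Fin.val_injective (by exact_mod_cast hc))
      rcases htval u with h3 | h3 <;> rcases htval v with h5 | h5 <;>
        rcases hval u v with h4 | h4 <;>
        simp only [hφ, h3, h4, h5] at heq <;> omega
  have hmemM : ∀ v, φ v ∈ Mset (2 * k) := by
    intro v
    have h1 : (P v : ℕ) < k := (P v).isLt
    have hform : φ v = (((P v : ℕ) + 1 : ℕ) : ℤ) ∨ φ v = -(((P v : ℕ) + 1 : ℕ) : ℤ) := by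
      rcases htval v with h3 | h3
      · left; simp [hφ, h3]
      · right; simp [hφ, h3]
    constructor
    · rcases hform with h3 | h3 <;> rw [h3] <;>
        simp [Int.natAbs_neg] <;> omega
    · left
      rcases hform with h3 | h3 <;> rw [h3] <;> intro h0 <;> omega
  have : SignedColorable G σ (2 * k) := ⟨φ, hproper, hmemM⟩
  exact Nat.sInf_le this
end

section
/- For every simple signed graph G, χ(G) ≤ χ_a(G̲), where χ_a(G̲) is the acyclic chromatic number of the underlying graph. -/
namespace SimpleGraph

variable {W : Type*} {H : SimpleGraph W} {α : Type*} [CommGroup α]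

def Walk.dartProd (f : W → W → α) {u v : W} (p : H.Walk u v) : α :=
  (p.darts.map fun d => f d.fst d.snd).prod

lemma Walk.dartProd_concat (f : W → W → α) {u v w : W} (p : H.Walk u v) (h : H.Adj v w) :
    (p.concat h).dartProd f = p.dartProd f * f v w := by
  simp [Walk.dartProd, Walk.darts_concat]

lemma IsAcyclic.dartProd_eq_mul_of_adj (hH : H.IsAcyclic) {f : W → W → α}
    (hf : ∀ u v, H.Adj u v → f v u = (f u v)⁻¹) {x u v : W} {p : H.Walk x u} {q : H.Walk x v}
    (hp : p.IsPath) (hq : q.IsPath) (huv : H.Adj u v) :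
    q.dartProd f = p.dartProd f * f u v := by
  by_cases hv : v ∈ p.support
  · rw [hH.path_concat hq hp huv.symm hv, Walk.dartProd_concat, hf u v huv, inv_mul_cancel_right]
  · have hu := hH.mem_support_of_ne_mem_support_of_adj_of_isPath hq hp huv.symm hv
    rw [hH.path_concat hp hq huv hu, Walk.dartProd_concat]

/-- The potential of `v` is the product of the weights along the path to `v` from a fixed root
of its component. -/
lemma IsAcyclic.exists_potential (hH : H.IsAcyclic) (f : W → W → α)
    (hf : ∀ u v, H.Adj u v → f v u = (f u v)⁻¹) :
    ∃ p : W → α, ∀ u v, H.Adj u v → p v = p u * f u v := by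
  let root : W → W := fun v => (H.connectedComponentMk v).out
  have hroot : ∀ v, H.Reachable (root v) v := fun v =>
    ConnectedComponent.exact (H.connectedComponentMk v).out_eq
  choose path hpath using fun v => (hroot v).exists_isPath
  refine ⟨fun v => (path v).dartProd f, fun u v huv => ?_⟩
  -- `root u = root v` holds only propositionally, so the two roots are generalized.
  have key : ∀ x y (p : H.Walk x u) (q : H.Walk y v), x = y → p.IsPath → q.IsPath →
      q.dartProd f = p.dartProd f * f u v := by
    rintro x _ p q rfl hp hq
    exact hH.dartProd_eq_mul_of_adj hf hp hq huv
  exact key _ _ (path u) (path v)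
    (congrArg Quot.out (ConnectedComponent.connectedComponentMk_eq_of_adj huv))
    (hpath u) (hpath v)

end SimpleGraph

open SimpleGraph

lemma IsSignature.neg {V : Type*} {σ : V → V → ℤ} (hσ : IsSignature σ) :
    IsSignature (-σ) :=
  ⟨fun u v => by simp [hσ.1 u v], fun u v => by rcases hσ.2 u v with h | h <;> simp [h]⟩

lemma IsSignature.exists_switching_of_isAcyclic_induce {V : Type*} {σ : V → V → ℤ}
    (hσ : IsSignature σ) (G : SimpleGraph V) (S : Set V) (hS : (G.induce S).IsAcyclic) :
    ∃ s : V → ℤ, (∀ v, s v = 1 ∨ s v = -1) ∧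
      ∀ u ∈ S, ∀ v ∈ S, G.Adj u v → s u * s v = σ u v := by
  classical
  let τ : V → V → ℤˣ := fun u v => if σ u v = 1 then 1 else -1
  have hτ : ∀ u v, (τ u v : ℤ) = σ u v := fun u v => by
    rcases hσ.2 u v with h | h <;> simp [τ, h]
  obtain ⟨p, hp⟩ := hS.exists_potential (fun x y => τ x y) fun x y _ => by
    rw [Int.units_inv_eq_self]
    exact Units.ext ((hτ _ _).trans ((hσ.1 _ _).trans (hτ _ _).symm))
  refine ⟨fun v => if hv : v ∈ S then (p ⟨v, hv⟩ : ℤ) else 1, fun v => ?_, ?_⟩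
  · dsimp only
    split_ifs
    · exact Int.isUnit_eq_one_or (Units.isUnit _)
    · exact Or.inl rfl
  · intro u hu v hv huv
    have h := hp ⟨u, hu⟩ ⟨v, hv⟩ huv
    dsimp only
    rw [← hτ, dif_pos hu, dif_pos hv, ← Units.val_mul, h, ← mul_assoc, Int.units_mul_self,
      one_mul]

lemma signedColorable_of_levels {V : Type*} (G : SimpleGraph V) {σ : V → V → ℤ}
    (hσ : IsSignature σ) (n : ℕ) (L : V → ℕ) (hle : ∀ v, 2 * L v ≤ n)
    (hzero : ∀ v, L v = 0 → n % 2 = 1) (hindep : ∀ u v, G.Adj u v → L u = 0 → L v ≠ 0)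
    (hforest : ∀ a, (G.induce {v | L v = a}).IsAcyclic) :
    SignedColorable G σ n := by
  choose s hs_pm hs using fun a => hσ.neg.exists_switching_of_isAcyclic_induce G _ (hforest a)
  have hs_abs : ∀ a v, (s a v).natAbs = 1 := fun a v => by
    rcases hs_pm a v with h | h <;> simp [h]
  refine ⟨fun v => s (L v) v * L v, fun u v huv heq => ?_, fun v => ⟨?_, ?_⟩⟩
  · have hL : L u = L v := by
      simpa [Int.natAbs_mul, hs_abs, Int.natAbs_of_isUnit (Int.isUnit_iff.mpr (hσ.2 u v))]
        using congrArg Int.natAbs heq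
    have hL0 : (L v : ℤ) ≠ 0 := by
      exact_mod_cast fun h0 => hindep u v huv (hL.trans h0) h0
    have hsign : s (L v) u = σ u v * s (L v) v :=
      mul_right_cancel₀ hL0 (by simp only [hL] at heq; rw [heq, mul_assoc])
    have hsv : s (L v) v * s (L v) v = 1 := Int.isUnit_mul_self (Int.isUnit_iff.mpr (hs_pm _ v))
    have hσ0 : σ u v = -σ u v := calc
      σ u v = σ u v * s (L v) v * s (L v) v := by rw [mul_assoc, hsv, mul_one]
      _ = -σ u v := by rw [← hsign, hs (L v) u hL v rfl huv]; rfl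
    rcases hσ.2 u v with h | h <;> rw [h] at hσ0 <;> norm_num at hσ0
  · simp [Int.natAbs_mul, hs_abs, hle]
  · by_cases h0 : L v = 0
    · exact Or.inr (hzero v h0)
    · left
      rcases hs_pm (L v) v with h | h <;> simp [h, h0]

lemma isAcyclic_induce_preimage_of_fibers_le_two {V ι κ : Type*} (G : SimpleGraph V)
    (c : V → ι) (hc : ∀ i j, (G.induce {v | c v = i ∨ c v = j}).IsAcyclic) (g : ι → κ)
    (hg : ∀ i, ∃ j, ∀ k, g k = g i → k = i ∨ k = j) (a : κ) :
    (G.induce {v | g (c v) = a}).IsAcyclic := by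
  by_cases ha : ∃ v, g (c v) = a
  · obtain ⟨v, rfl⟩ := ha
    obtain ⟨j, hj⟩ := hg (c v)
    exact (hc (c v) j).embedding (induceHomOfLE G fun w hw => hj (c w) hw)
  · exact fun v => (ha ⟨v.1, v.2⟩).elim

/-- Pairs up the colours of `Fin n`: for `n = 2k` the classes `{0,1}, {2,3}, …` get levels
`1, …, k`; for `n = 2k+1` the class `{0}` gets level `0` and `{1,2}, {3,4}, …` get `1, …, k`. -/
def pairLevel (n : ℕ) (i : Fin n) : ℕ := (i + 2 - n % 2) / 2

lemma two_mul_pairLevel_le {n : ℕ} (i : Fin n) : 2 * pairLevel n i ≤ n := by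
  have := i.isLt
  unfold pairLevel
  omega

lemma pairLevel_eq_zero {n : ℕ} {i : Fin n} (h : pairLevel n i = 0) :
    (i : ℕ) = 0 ∧ n % 2 = 1 := by
  have := i.isLt
  unfold pairLevel at h
  omega

lemma exists_pairLevel_fiber_subset {n : ℕ} (i : Fin n) :
    ∃ j, ∀ k, pairLevel n k = pairLevel n i → k = i ∨ k = j := by
  by_cases hj : ∃ j, j ≠ i ∧ pairLevel n j = pairLevel n i
  · obtain ⟨j, hji, hj⟩ := hj
    refine ⟨j, fun k hk => ?_⟩
    rw [Ne, Fin.ext_iff] at hji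
    rw [Fin.ext_iff, Fin.ext_iff]
    unfold pairLevel at hj hk
    omega
  · exact ⟨i, fun k hk => Or.inl (not_not.mp fun hki => hj ⟨k, hki, hk⟩)⟩

theorem signed_chromatic_le_acyclic_chromatic_general
    {V : Type*} (G : SimpleGraph V) (σ : V → V → ℤ) (hσ : IsSignature σ)
    (n : ℕ)
    (h : ∃ c : V → Fin n, (∀ u v, G.Adj u v → c u ≠ c v) ∧
      ∀ i j, (G.induce {v | c v = i ∨ c v = j}).IsAcyclic) :
    signedChromaticNumber G σ ≤ n := by
  obtain ⟨c, hproper, hacyclic⟩ := h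
  have hindep : ∀ u v, G.Adj u v → pairLevel n (c u) = 0 → pairLevel n (c v) ≠ 0 :=
    fun u v huv hu hv => hproper u v huv <|
      Fin.ext ((pairLevel_eq_zero hu).1.trans (pairLevel_eq_zero hv).1.symm)
  exact Nat.sInf_le <| signedColorable_of_levels G hσ n (fun v => pairLevel n (c v))
    (fun v => two_mul_pairLevel_le (c v)) (fun v hv => (pairLevel_eq_zero hv).2) hindep
    (isAcyclic_induce_preimage_of_fibers_le_two G c hacyclic (pairLevel n)
      exists_pairLevel_fiber_subset)

/-- For every simple signed graph, `χ(G) ≤ χₐ(G̲)`: if the underlying graph has a proper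
`n`-colouring in which the union of any two colour classes induces a forest, then the signed
graph is `n`-colourable. -/
theorem signed_chromatic_le_acyclic_chromatic
    {V : Type*} [Fintype V] (G : SimpleGraph V) (σ : V → V → ℤ) (hσ : IsSignature σ)
    (n : ℕ)
    (h : ∃ c : V → Fin n, (∀ u v, G.Adj u v → c u ≠ c v) ∧
      ∀ i j, (G.induce {v | c v = i ∨ c v = j}).IsAcyclic) :
    signedChromaticNumber G σ ≤ n :=
  signed_chromatic_le_acyclic_chromatic_general G σ hσ n h
end

section
/- If G is a signed complete graph on n vertices, then χ(G) ≤ n, with equality if and only if G is balanced. -/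
/-- A signed graph is balanced if it is switching equivalent to the all-positive signature;
equivalently every cycle has positive sign product. -/
def SignBalanced {V : Type*} (G : SimpleGraph V) (σ : V → V → ℤ) : Prop :=
  ∃ θ : V → ℤ, (∀ v, θ v = 1 ∨ θ v = -1) ∧ ∀ u v, G.Adj u v → σ u v = θ u * θ v


section Aux

lemma mem_Mset {n : ℕ} {x : ℤ} : x ∈ Mset n ↔ 2 * x.natAbs ≤ n ∧ (x ≠ 0 ∨ n % 2 = 1) :=
  Iff.rfl

lemma Mset_mono2 {m : ℕ} : Mset m ⊆ Mset (m + 2) := by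
  intro x hx
  rw [mem_Mset] at hx ⊢
  omega

lemma card_le_of_inj {V : Type*} [Fintype V] (m : ℕ) (f : V → ℤ)
    (hinj : Function.Injective f) (hmem : ∀ v, f v ∈ Mset m) : Fintype.card V ≤ m := by
  classical
  set k : ℕ := m / 2 with hk
  set S : Finset ℤ := if m % 2 = 1 then Finset.Icc (-(k:ℤ)) k
    else (Finset.Icc (-(k:ℤ)) k).erase 0 with hS
  have hcardIcc : (Finset.Icc (-(k:ℤ)) k).card = 2 * k + 1 := by
    rw [Int.card_Icc]; omega
  have hScard : S.card = m := by
    rw [hS]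
    by_cases hpar : m % 2 = 1
    · simp only [hpar, if_true, hcardIcc]; omega
    · simp only [hpar, if_false]
      rw [Finset.card_erase_of_mem (by simp)]
      omega
  have hsub : ∀ v, f v ∈ S := by
    intro v
    have h := hmem v
    rw [mem_Mset] at h
    have habs : -(k:ℤ) ≤ f v ∧ f v ≤ k := by omega
    rw [hS]
    by_cases hpar : m % 2 = 1
    · simp only [hpar, if_true, Finset.mem_Icc]; exact habs
    · simp only [hpar, if_false, Finset.mem_erase, Finset.mem_Icc]
      refine ⟨?_, habs⟩
      rcases h.2 with h0 | h0
      · exact h0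
      · omega
  calc Fintype.card V = (Finset.univ.image f).card := by
        rw [Finset.card_image_of_injective _ hinj, Finset.card_univ]
      _ ≤ S.card := by
        refine Finset.card_le_card ?_
        intro x hx
        simp only [Finset.mem_image] at hx
        obtain ⟨v, -, rfl⟩ := hx
        exact hsub v
      _ = m := hScard

lemma ne_of_natAbs_lt {a b e : ℤ} (h : a.natAbs < b.natAbs) (he : e = 1 ∨ e = -1) :
    a ≠ e * b ∧ b ≠ e * a := by
  constructor <;> intro hc <;> rcases he with rfl | rfl <;>
    simp only [one_mul, neg_mul, neg_one_mul] at hc <;> subst hc <;>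
    simp [Int.natAbs_neg] at h

end Aux

lemma pair_extend {V : Type*} [DecidableEq V] (σ : V → V → ℤ) (hσ : IsSignature σ) :
    ∀ (j : ℕ) (s t : Finset V), t ⊆ s → s.card = t.card + 2 * j →
      ∀ (m : ℕ) (φ₀ : V → ℤ),
        (∀ u ∈ t, ∀ v ∈ t, u ≠ v → φ₀ u ≠ σ u v * φ₀ v) →
        (∀ v ∈ t, φ₀ v ∈ Mset m) →
        ∃ φ : V → ℤ, (∀ u ∈ s, ∀ v ∈ s, u ≠ v → φ u ≠ σ u v * φ v) ∧
          ∀ v ∈ s, φ v ∈ Mset (m + 2 * j) := by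
  intro j
  induction j with
  | zero =>
    intro s t hts hcard m φ₀ hp hm
    have hst : t = s := Finset.eq_of_subset_of_card_le hts (by omega)
    subst hst
    exact ⟨φ₀, hp, by simpa using hm⟩
  | succ j ih =>
    intro s t hts hcard m φ₀ hp hm
    have hsd : (s \ t).card = 2 * j + 2 := by
      rw [Finset.card_sdiff_of_subset hts]; omega
    obtain ⟨u, hu⟩ : (s \ t).Nonempty := Finset.card_pos.mp (by omega)
    obtain ⟨v, hv⟩ : ((s \ t).erase u).Nonempty := Finset.card_pos.mp (by
      rw [Finset.card_erase_of_mem hu]; omega)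
    have hvu : v ≠ u := (Finset.mem_erase.mp hv).1
    have hv' : v ∈ s \ t := (Finset.mem_erase.mp hv).2
    have hus : u ∈ s := (Finset.mem_sdiff.mp hu).1
    have hut : u ∉ t := (Finset.mem_sdiff.mp hu).2
    have hvs : v ∈ s := (Finset.mem_sdiff.mp hv').1
    have hvt : v ∉ t := (Finset.mem_sdiff.mp hv').2
    set s' : Finset V := (s.erase u).erase v with hs'
    have hts' : t ⊆ s' := by
      intro x hx
      simp only [hs', Finset.mem_erase]
      exact ⟨fun h => hvt (h ▸ hx), fun h => hut (h ▸ hx), hts hx⟩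
    have hcard' : s'.card = t.card + 2 * j := by
      rw [hs', Finset.card_erase_of_mem (Finset.mem_erase.mpr ⟨hvu, hvs⟩),
        Finset.card_erase_of_mem hus]
      omega
    obtain ⟨φ, hφp, hφm⟩ := ih s' t hts' hcard' m φ₀ hp hm
    set K : ℤ := (((m + 2 * j) / 2 + 1 : ℕ) : ℤ) with hK
    have hKabs : K.natAbs = (m + 2 * j) / 2 + 1 := Int.natAbs_natCast _
    have hKpos : 0 < K := by omega
    have hlt : ∀ x ∈ s', (φ x).natAbs < K.natAbs := by
      intro x hx
      have := (hφm x hx).1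
      omega
    set ψ : V → ℤ := fun x => if x = u then K else if x = v then -σ u v * K else φ x with hψ
    have hmem_s : ∀ x ∈ s, x = u ∨ x = v ∨ x ∈ s' := by
      intro x hx
      by_cases h1 : x = u
      · exact Or.inl h1
      · by_cases h2 : x = v
        · exact Or.inr (Or.inl h2)
        · exact Or.inr (Or.inr (Finset.mem_erase.mpr ⟨h2, Finset.mem_erase.mpr ⟨h1, hx⟩⟩))
    have hsuv : σ u v = 1 ∨ σ u v = -1 := hσ.2 u v
    have hψu : ψ u = K := by simp [hψ]
    have hψv : ψ v = -σ u v * K := by simp [hψ, hvu]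
    have hψo : ∀ x ∈ s', ψ x = φ x := by
      intro x hx
      have h1 : x ≠ v := (Finset.mem_erase.mp hx).1
      have h2 : x ≠ u := (Finset.mem_erase.mp (Finset.mem_erase.mp hx).2).1
      simp [hψ, h1, h2]
    have hvabs : (ψ v).natAbs = K.natAbs := by
      rw [hψv]
      rcases hsuv with h | h <;> rw [h] <;> simp
    refine ⟨ψ, ?_, ?_⟩
    · intro x hx y hy hxy
      rcases hmem_s x hx with rfl | rfl | hx' <;> rcases hmem_s y hy with rfl | rfl | hy'
      · exact absurd rfl hxy
      · rw [hψu, hψv]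
        have hred : σ x y * (-σ x y * K) = -K := by
          rcases hσ.2 x y with h | h <;> rw [h] <;> ring
        rw [hred]; omega
      · rw [hψu, hψo y hy']
        exact (ne_of_natAbs_lt (hlt y hy') (hσ.2 x y)).2
      · rw [hψv, hψu, hσ.1 x y]
        rcases hsuv with h | h <;> rw [h] <;> omega
      · exact absurd rfl hxy
      · rw [hψo y hy']
        exact (ne_of_natAbs_lt (by rw [hvabs]; exact hlt y hy') (hσ.2 x y)).2
      · rw [hψo x hx', hψu]
        exact (ne_of_natAbs_lt (hlt x hx') (hσ.2 x y)).1
      · rw [hψo x hx']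
        exact (ne_of_natAbs_lt (by rw [hvabs]; exact hlt x hx') (hσ.2 x y)).1
      · rw [hψo x hx', hψo y hy']
        exact hφp x hx' y hy' hxy
    · intro x hx
      have hm2 : m + 2 * (j + 1) = (m + 2 * j) + 2 := by ring
      rcases hmem_s x hx with rfl | rfl | hx'
      · rw [hψu, mem_Mset]
        constructor
        · omega
        · exact Or.inl (by omega)
      · rw [mem_Mset]
        constructor
        · rw [hvabs]; omega
        · refine Or.inl fun h => ?_
          rw [h] at hvabs
          simp at hvabs
          omega
      · rw [hψo x hx', hm2]
        exact Mset_mono2 (hφm x hx')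

lemma colorable_card {V : Type*} [Fintype V] (σ : V → V → ℤ) (hσ : IsSignature σ) :
    SignedColorable (⊤ : SimpleGraph V) σ (Fintype.card V) := by
  classical
  rcases Nat.even_or_odd (Fintype.card V) with ⟨j, hj⟩ | ⟨j, hj⟩
  · obtain ⟨φ, hp, hm⟩ := pair_extend σ hσ j Finset.univ ∅ (Finset.empty_subset _)
      (by rw [Finset.card_univ]; simp; omega) 0 0 (by simp) (by simp)
    refine ⟨φ, fun u v hadj => hp u (Finset.mem_univ u) v (Finset.mem_univ v) hadj.ne, ?_⟩
    intro v
    have := hm v (Finset.mem_univ v)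
    have he : 0 + 2 * j = Fintype.card V := by omega
    rwa [he] at this
  · have hpos : Nonempty V := Fintype.card_pos_iff.mp (by omega)
    obtain ⟨w⟩ := hpos
    obtain ⟨φ, hp, hm⟩ := pair_extend σ hσ j Finset.univ {w} (Finset.subset_univ _)
      (by rw [Finset.card_univ]; simp; omega) 1 0
      (by intro u hu v hv huv
          rw [Finset.mem_singleton] at hu hv
          exact absurd (hu.trans hv.symm) huv)
      (by intro v _; exact ⟨by simp, Or.inr rfl⟩)
    refine ⟨φ, fun u v hadj => hp u (Finset.mem_univ u) v (Finset.mem_univ v) hadj.ne, ?_⟩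
    intro v
    have := hm v (Finset.mem_univ v)
    have he : 1 + 2 * j = Fintype.card V := by omega
    rwa [he] at this

lemma neg_triangle_colorable {V : Type*} [Fintype V] (σ : V → V → ℤ) (hσ : IsSignature σ)
    (a b c : V) (hab : a ≠ b) (hac : a ≠ c) (hbc : b ≠ c)
    (hneg : σ a b * σ a c * σ b c = -1) :
    SignedColorable (⊤ : SimpleGraph V) σ (Fintype.card V - 1) := by
  classical
  have hc3 : ({a, b, c} : Finset V).card = 3 :=
    Finset.card_eq_three.mpr ⟨a, b, c, hab, hac, hbc, rfl⟩
  have h3 : 3 ≤ Fintype.card V := by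
    calc 3 = ({a, b, c} : Finset V).card := hc3.symm
    _ ≤ Fintype.card V := (Finset.card_le_univ _).trans_eq Finset.card_univ
  set φ₀ : V → ℤ := fun x => if x = a then 1 else if x = b then -σ a b else -σ a c with hφ₀
  have hpa : φ₀ a = 1 := by simp [hφ₀]
  have hpb : φ₀ b = -σ a b := by simp [hφ₀, Ne.symm hab]
  have hpc : φ₀ c = -σ a c := by simp [hφ₀, Ne.symm hac, Ne.symm hbc]
  have hmem : ∀ v ∈ ({a, b, c} : Finset V), φ₀ v ∈ Mset 2 := by
    intro v hv
    rw [Finset.mem_insert, Finset.mem_insert, Finset.mem_singleton] at hv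
    rcases hv with h | h | h <;> rw [h]
    · rw [hpa]; exact ⟨by simp, Or.inl one_ne_zero⟩
    · rw [hpb]; rcases hσ.2 a b with h | h <;> rw [h] <;> exact ⟨by simp, Or.inl (by norm_num)⟩
    · rw [hpc]; rcases hσ.2 a c with h | h <;> rw [h] <;> exact ⟨by simp, Or.inl (by norm_num)⟩
  have hprop : ∀ u ∈ ({a, b, c} : Finset V), ∀ v ∈ ({a, b, c} : Finset V),
      u ≠ v → φ₀ u ≠ σ u v * φ₀ v := by
    intro u hu v hv huv
    rw [Finset.mem_insert, Finset.mem_insert, Finset.mem_singleton] at hu hv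
    rcases hu with h1 | h1 | h1 <;> rcases hv with h2 | h2 | h2 <;> rw [h1, h2] at huv ⊢ <;>
      first
        | exact absurd rfl huv
        | (simp only [hpa, hpb, hpc, hσ.1 b a, hσ.1 c a, hσ.1 c b]
           rcases hσ.2 a b with s1 | s1 <;> rcases hσ.2 a c with s2 | s2 <;>
             rcases hσ.2 b c with s3 | s3 <;>
             simp only [s1, s2, s3] at hneg ⊢ <;> omega)
  rcases Nat.even_or_odd (Fintype.card V) with ⟨j0, hj⟩ | ⟨j0, hj⟩
  · -- card even, card = 4 + 2*(j0-2)  ; pick w outside the triangle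
    obtain ⟨j, hj'⟩ : ∃ j, Fintype.card V = 4 + 2 * j := ⟨j0 - 2, by omega⟩
    have hwne : (Finset.univ \ ({a, b, c} : Finset V)).Nonempty := by
      apply Finset.card_pos.mp
      rw [Finset.card_sdiff_of_subset (Finset.subset_univ _), hc3, Finset.card_univ]
      omega
    obtain ⟨w, hw⟩ := hwne
    have hwt : w ∉ ({a, b, c} : Finset V) := (Finset.mem_sdiff.mp hw).2
    have hts : ({a, b, c} : Finset V) ⊆ Finset.univ.erase w := by
      intro x hx
      exact Finset.mem_erase.mpr ⟨fun h => hwt (h ▸ hx), Finset.mem_univ x⟩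
    obtain ⟨φ, hp, hm⟩ := pair_extend σ hσ j (Finset.univ.erase w) {a, b, c} hts
      (by rw [Finset.card_erase_of_mem (Finset.mem_univ w), Finset.card_univ, hc3]; omega)
      2 φ₀ hprop hmem
    have hx0 : ∀ x ∈ Finset.univ.erase w, φ x ≠ 0 := by
      intro x hx
      have := (hm x hx).2
      rcases this with h | h
      · exact h
      · omega
    set φ' : V → ℤ := fun x => if x = w then 0 else φ x with hφ'
    have hφ'w : φ' w = 0 := by simp [hφ']
    have hφ'o : ∀ x, x ≠ w → φ' x = φ x := fun x hx => by simp [hφ', hx]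
    refine ⟨φ', ?_, ?_⟩
    · intro u v hadj
      have huv : u ≠ v := hadj.ne
      by_cases hu : u = w
      · have hvw : v ≠ w := fun h => huv (hu.trans h.symm)
        have hv' : v ∈ Finset.univ.erase w := Finset.mem_erase.mpr ⟨hvw, Finset.mem_univ v⟩
        rw [hu, hφ'w, hφ'o v hvw]
        have := hx0 v hv'
        rcases hσ.2 w v with h | h <;> rw [h] <;> omega
      · by_cases hv : v = w
        · rw [hv, hφ'w, hφ'o u hu, mul_zero]
          exact hx0 u (Finset.mem_erase.mpr ⟨hu, Finset.mem_univ u⟩)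
        · rw [hφ'o u hu, hφ'o v hv]
          exact hp u (Finset.mem_erase.mpr ⟨hu, Finset.mem_univ u⟩)
            v (Finset.mem_erase.mpr ⟨hv, Finset.mem_univ v⟩) huv
    · intro v
      by_cases hv : v = w
      · rw [hv, hφ'w, mem_Mset]
        exact ⟨by simp, Or.inr (by omega)⟩
      · rw [hφ'o v hv]
        have := hm v (Finset.mem_erase.mpr ⟨hv, Finset.mem_univ v⟩)
        rw [mem_Mset] at this ⊢
        have h0 : φ v ≠ 0 := this.2.resolve_right (by omega)
        exact ⟨by omega, Or.inl h0⟩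
  · -- card odd, card = 3 + 2*(j0-1)
    obtain ⟨j, hj'⟩ : ∃ j, Fintype.card V = 3 + 2 * j := ⟨j0 - 1, by omega⟩
    obtain ⟨φ, hp, hm⟩ := pair_extend σ hσ j Finset.univ {a, b, c} (Finset.subset_univ _)
      (by rw [Finset.card_univ, hc3]; omega) 2 φ₀ hprop hmem
    refine ⟨φ, fun u v hadj => hp u (Finset.mem_univ u) v (Finset.mem_univ v) hadj.ne, ?_⟩
    intro v
    have := hm v (Finset.mem_univ v)
    have he : 2 + 2 * j = Fintype.card V - 1 := by omega
    rwa [he] at this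

lemma no_negtriangle_balanced {V : Type*} (σ : V → V → ℤ) (hσ : IsSignature σ)
    (h : ∀ x y z : V, x ≠ y → x ≠ z → y ≠ z → σ x y * σ x z * σ y z ≠ -1) :
    SignBalanced (⊤ : SimpleGraph V) σ := by
  classical
  by_cases hne : Nonempty V
  · obtain ⟨v0⟩ := hne
    set θ : V → ℤ := fun x => if x = v0 then 1 else σ v0 x with hθdef
    refine ⟨θ, ?_, ?_⟩
    · intro v
      by_cases hv : v = v0
      · left; simp [hθdef, hv]
      · simpa [hθdef, hv] using hσ.2 v0 v
    · intro u v hadj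
      have huv : u ≠ v := hadj.ne
      by_cases hu0 : u = v0
      · subst hu0
        have hv0 : v ≠ u := Ne.symm huv
        simp [hθdef, hv0]
      · by_cases hv0 : v = v0
        · subst hv0
          simp only [hθdef, if_neg hu0, if_pos rfl, mul_one]
          exact hσ.1 u v
        · have hkey := h v0 u v (Ne.symm hu0) (Ne.symm hv0) huv
          simp only [hθdef, if_neg hu0, if_neg hv0]
          rcases hσ.2 v0 u with h1 | h1 <;> rcases hσ.2 v0 v with h2 | h2 <;>
            rcases hσ.2 u v with h3 | h3 <;>
            simp only [h1, h2, h3] at hkey ⊢ <;> omega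
  · refine ⟨fun _ => 1, fun v => Or.inl rfl, fun u v _ => absurd ⟨u⟩ hne⟩

lemma balanced_le {V : Type*} [Fintype V] (σ : V → V → ℤ) (hσ : IsSignature σ)
    (hbal : SignBalanced (⊤ : SimpleGraph V) σ) (m : ℕ)
    (hcol : SignedColorable (⊤ : SimpleGraph V) σ m) : Fintype.card V ≤ m := by
  obtain ⟨θ, hθ, hσθ⟩ := hbal
  obtain ⟨φ, hp, hm⟩ := hcol
  apply card_le_of_inj m (fun v => θ v * φ v)
  · intro u v h
    by_contra hne
    have hadj : (⊤ : SimpleGraph V).Adj u v := by simpa using hne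
    have hne' := hp u v hadj
    rw [hσθ u v hadj] at hne'
    simp only at h
    rcases hθ u with h1 | h1 <;> rcases hθ v with h2 | h2 <;>
      rw [h1, h2] at h hne' <;> omega
  · intro v
    have := hm v
    rcases hθ v with h1 | h1 <;> rw [h1]
    · simpa using this
    · simp only [neg_one_mul]
      rw [mem_Mset] at this ⊢
      simp only [Int.natAbs_neg, neg_ne_zero]
      exact this

/-- A signed complete graph on `n` vertices has `χ(G) ≤ n`, with equality iff it is balanced. -/
theorem signed_complete_graph_chromatic
    {V : Type*} [Fintype V] (σ : V → V → ℤ) (hσ : IsSignature σ) :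
    signedChromaticNumber (⊤ : SimpleGraph V) σ ≤ Fintype.card V ∧
      (signedChromaticNumber (⊤ : SimpleGraph V) σ = Fintype.card V ↔
        SignBalanced (⊤ : SimpleGraph V) σ) := by
  classical
  have hcol : SignedColorable (⊤ : SimpleGraph V) σ (Fintype.card V) := colorable_card σ hσ
  have hub : signedChromaticNumber (⊤ : SimpleGraph V) σ ≤ Fintype.card V := Nat.sInf_le hcol
  refine ⟨hub, ?_, ?_⟩
  · intro heq
    by_contra hnb
    have htri : ∃ a b c : V, a ≠ b ∧ a ≠ c ∧ b ≠ c ∧ σ a b * σ a c * σ b c = -1 := by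
      by_contra h
      push_neg at h
      exact hnb (no_negtriangle_balanced σ hσ fun x y z hxy hxz hyz => h x y z hxy hxz hyz)
    obtain ⟨a, b, c, hab, hac, hbc, hneg⟩ := htri
    have h3 : 3 ≤ Fintype.card V := by
      have hc3 : ({a, b, c} : Finset V).card = 3 :=
        Finset.card_eq_three.mpr ⟨a, b, c, hab, hac, hbc, rfl⟩
      calc 3 = ({a, b, c} : Finset V).card := hc3.symm
      _ ≤ Fintype.card V := (Finset.card_le_univ _).trans_eq Finset.card_univ
    have hcol' := neg_triangle_colorable σ hσ a b c hab hac hbc hneg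
    have hle : signedChromaticNumber (⊤ : SimpleGraph V) σ ≤ Fintype.card V - 1 :=
      Nat.sInf_le hcol'
    omega
  · intro hbal
    exact le_antisymm hub (le_csInf ⟨_, hcol⟩ fun m hm => balanced_le σ hσ hbal m hm)
end

section
/- Every unbalanced signed complete graph on n ≥ 3 vertices satisfies χ(G) ≤ n − 1. -/
/-! An unbalanced signed complete graph contains a negative triangle: if all triangles were
positive, switching by `v ↦ σ(a, v)` at a fixed vertex `a` would make every edge positive.
A negative triangle `a, b, c` is properly coloured by `1, -σ(a, b), -σ(a, c)`. The remaining
vertices are coloured in pairs `{u, v}` by `r, -σ(u, v) r` with a fresh magnitude `r`, plus `0` on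
a possible leftover vertex; vertices whose colours differ in absolute value never conflict, and
all colours lie in `M_(n-1)`. -/

lemma natAbs_sign_mul {s : ℤ} (hs : s = 1 ∨ s = -1) (y : ℤ) : (s * y).natAbs = y.natAbs := by
  rcases hs with rfl | rfl <;> simp

lemma ne_sign_mul_of_natAbs_ne {x y s : ℤ} (hs : s = 1 ∨ s = -1) (h : x.natAbs ≠ y.natAbs) :
    x ≠ s * y := by
  rintro rfl
  exact h (natAbs_sign_mul hs y)

lemma ne_zero_of_mem_Mset {m : ℕ} (hm : Even m) {x : ℤ} (hx : x ∈ Mset m) : x ≠ 0 :=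
  hx.2.resolve_right (Nat.even_iff.1 hm ▸ by decide)

lemma Mset_subset_Mset_add_two (m : ℕ) : Mset m ⊆ Mset (m + 2) :=
  fun _ ⟨hle, hx⟩ => ⟨by omega, by omega⟩

lemma Mset_subset_Mset_add_one_of_even {m : ℕ} (hm : Even m) : Mset m ⊆ Mset (m + 1) :=
  fun _ hx => ⟨by have := hx.1; omega, Or.inl (ne_zero_of_mem_Mset hm hx)⟩

lemma mem_Mset_add_two_of_natAbs_eq {m : ℕ} {x : ℤ} (hx : x.natAbs = m / 2 + 1) :
    x ∈ Mset (m + 2) :=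
  ⟨by omega, Or.inl (by omega)⟩

lemma Finset.exists_mem_subset_erase_of_card_lt {α : Type*} [DecidableEq α] {s t : Finset α}
    (hst : s ⊆ t) (h : s.card < t.card) : ∃ w ∈ t, s ⊆ t.erase w :=
  let ⟨w, hwt, hws⟩ := Finset.exists_mem_notMem_of_card_lt_card h
  ⟨w, hwt, Finset.subset_erase.2 ⟨hst, hws⟩⟩

section ColorableOn

variable {V : Type*} (σ : V → V → ℤ)

def SignedColorableOn (s : Finset V) (m : ℕ) : Prop :=
  ∃ φ : V → ℤ, (∀ u ∈ s, ∀ v ∈ s, u ≠ v → φ u ≠ σ u v * φ v) ∧ ∀ v ∈ s, φ v ∈ Mset m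

variable {σ}

lemma SignedColorableOn.signedColorable_top [Fintype V] {m : ℕ}
    (h : SignedColorableOn σ Finset.univ m) : SignedColorable (⊤ : SimpleGraph V) σ m :=
  let ⟨φ, hprop, hmem⟩ := h
  ⟨φ, fun u v huv => hprop u (Finset.mem_univ u) v (Finset.mem_univ v) huv,
    fun v => hmem v (Finset.mem_univ v)⟩

variable [DecidableEq V]

lemma signedColorableOn_triangle (hσ : IsSignature σ) {a b c : V} (hab : a ≠ b) (hac : a ≠ c)
    (hbc : b ≠ c) (hneg : σ a b * σ b c * σ a c = -1) :
    SignedColorableOn σ {a, b, c} 2 := by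
  obtain ⟨hsymm, hpm⟩ := hσ
  refine ⟨fun v => if v = a then 1 else if v = b then -σ a b else -σ a c, ?_, ?_⟩
  · intro u hu v hv huv
    simp only [Finset.mem_insert, Finset.mem_singleton] at hu hv
    rcases hu with hu | hu | hu <;> rcases hv with hv | hv | hv <;> subst u v <;> try contradiction
    all_goals
      simp only [if_pos, hab.symm, hac.symm, hbc.symm, hsymm b a, hsymm c a, hsymm c b]
      rcases hpm a b with h1 | h1 <;> rcases hpm b c with h2 | h2 <;> rcases hpm a c with h3 | h3 <;>
        simp_all
  · intro v hv
    simp only [Finset.mem_insert, Finset.mem_singleton] at hv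
    rcases hv with hv | hv | hv <;> subst v <;>
      rcases hpm a b with h1 | h1 <;> rcases hpm a c with h3 | h3 <;>
      simp [Mset, h1, h3, hab.symm, hac.symm, hbc.symm]

lemma SignedColorableOn.insert_zero (hσ : IsSignature σ) {s : Finset V} {m : ℕ} (w : V)
    (hm : Even m) (h : SignedColorableOn σ s m) : SignedColorableOn σ (insert w s) (m + 1) := by
  obtain ⟨φ, hprop, hmem⟩ := h
  refine ⟨Function.update φ w 0, fun u hu v hv huv => ?_, fun v hv => ?_⟩
  · by_cases huw : u = w <;> by_cases hvw : v = w
    · exact absurd (huw.trans hvw.symm) huv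
    · subst huw
      have := ne_zero_of_mem_Mset hm (hmem v (Finset.mem_of_mem_insert_of_ne hv hvw))
      apply ne_sign_mul_of_natAbs_ne (hσ.2 u v)
      simpa [hvw, eq_comm] using this
    · subst hvw
      have := ne_zero_of_mem_Mset hm (hmem u (Finset.mem_of_mem_insert_of_ne hu huw))
      simpa [huw] using this
    · simpa [huw, hvw] using
        hprop u (Finset.mem_of_mem_insert_of_ne hu huw) v (Finset.mem_of_mem_insert_of_ne hv hvw) huv
  · by_cases hvw : v = w
    · subst hvw
      simp [Mset, Nat.add_mod, Nat.even_iff.1 hm]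
    · simpa [hvw] using Mset_subset_Mset_add_one_of_even hm (hmem v (Finset.mem_of_mem_insert_of_ne hv hvw))

lemma SignedColorableOn.insert_pair (hσ : IsSignature σ) {s : Finset V} {m : ℕ} {u v : V}
    (huv : u ≠ v) (h : SignedColorableOn σ s m) :
    SignedColorableOn σ (insert u (insert v s)) (m + 2) := by
  obtain ⟨φ, hprop, hmem⟩ := h
  set r : ℤ := ((m / 2 + 1 : ℕ) : ℤ)
  set ψ := Function.update (Function.update φ u r) v (-σ u v * r)
  have hψu : ψ u = r := by simp [ψ, huv]
  have hψv : ψ v = -σ u v * r := by simp [ψ]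
  have hnew : ∀ x, x = u ∨ x = v → (ψ x).natAbs = m / 2 + 1 := by
    rintro x (rfl | rfl)
    · rw [hψu]; rfl
    · rw [hψv, neg_mul, Int.natAbs_neg, natAbs_sign_mul (hσ.2 u x)]
      rfl
  have hold : ∀ x ∈ insert u (insert v s), ¬(x = u ∨ x = v) → x ∈ s ∧ ψ x = φ x := by
    intro x hx hxuv
    rw [not_or] at hxuv
    exact ⟨by simpa [hxuv] using hx, by simp [ψ, hxuv]⟩
  refine ⟨ψ, fun x hx y hy hxy => ?_, fun x hx => ?_⟩
  · by_cases hx' : x = u ∨ x = v <;> by_cases hy' : y = u ∨ y = v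
    · rcases hx' with rfl | rfl <;> rcases hy' with rfl | rfl
      · exact absurd rfl hxy
      · rcases hσ.2 x y with h | h <;> simp [hψu, hψv, h, r] <;> omega
      · rcases hσ.2 y x with h | h <;> simp [hψu, hψv, h, hσ.1 x y, r] <;> omega
      · exact absurd rfl hxy
    · obtain ⟨hys, hψy⟩ := hold y hy hy'
      apply ne_sign_mul_of_natAbs_ne (hσ.2 x y)
      have := (hmem y hys).1
      rw [hnew x hx', hψy]
      omega
    · obtain ⟨hxs, hψx⟩ := hold x hx hx'
      apply ne_sign_mul_of_natAbs_ne (hσ.2 x y)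
      have := (hmem x hxs).1
      rw [hnew y hy', hψx]
      omega
    · obtain ⟨hxs, hψx⟩ := hold x hx hx'
      obtain ⟨hys, hψy⟩ := hold y hy hy'
      rw [hψx, hψy]
      exact hprop x hxs y hys hxy
  · by_cases hx' : x = u ∨ x = v
    · exact mem_Mset_add_two_of_natAbs_eq (hnew x hx')
    · obtain ⟨hxs, hψx⟩ := hold x hx hx'
      exact hψx ▸ Mset_subset_Mset_add_two m (hmem x hxs)

lemma signedColorableOn_of_triangle_subset_of_card_eq (hσ : IsSignature σ) {a b c : V}
    (hab : a ≠ b) (hac : a ≠ c) (hbc : b ≠ c) (hneg : σ a b * σ b c * σ a c = -1) (k : ℕ) :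
    ∀ t : Finset V, {a, b, c} ⊆ t → t.card = k + 3 → SignedColorableOn σ t (k + 2) := by
  set T : Finset V := {a, b, c}
  have hT : T.card = 3 := Finset.card_eq_three.2 ⟨a, b, c, hab, hac, hbc, rfl⟩
  have base : ∀ t, T ⊆ t → t.card = 3 → SignedColorableOn σ t 2 := fun t ht hcard => by
    rw [← Finset.eq_of_subset_of_card_le ht (by omega)]
    exact signedColorableOn_triangle hσ hab hac hbc hneg
  induction k using Nat.twoStepInduction with
  | zero => exact base
  | one =>
    intro t ht hcard
    obtain ⟨w, hwt, hTw⟩ := Finset.exists_mem_subset_erase_of_card_lt ht (by omega)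
    rw [← Finset.insert_erase hwt]
    refine (base _ hTw ?_).insert_zero hσ w even_two
    rw [Finset.card_erase_of_mem hwt, hcard]
  | more k ih _ =>
    intro t ht hcard
    obtain ⟨u, hut, hTu⟩ := Finset.exists_mem_subset_erase_of_card_lt ht (by omega)
    obtain ⟨v, hvt, hTv⟩ := Finset.exists_mem_subset_erase_of_card_lt hTu
      (by rw [Finset.card_erase_of_mem hut]; omega)
    rw [← Finset.insert_erase hut, ← Finset.insert_erase hvt]
    refine (ih _ hTv ?_).insert_pair hσ (Finset.ne_of_mem_erase hvt).symm
    rw [Finset.card_erase_of_mem hvt, Finset.card_erase_of_mem hut, hcard]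
    rfl

lemma signedColorableOn_of_triangle_subset (hσ : IsSignature σ) {a b c : V} (hab : a ≠ b)
    (hac : a ≠ c) (hbc : b ≠ c) (hneg : σ a b * σ b c * σ a c = -1) {t : Finset V}
    (ht : {a, b, c} ⊆ t) : SignedColorableOn σ t (t.card - 1) := by
  have hcard := Finset.card_le_card ht
  rw [Finset.card_eq_three.2 ⟨a, b, c, hab, hac, hbc, rfl⟩] at hcard
  rw [show t.card - 1 = t.card - 3 + 2 by omega]
  exact signedColorableOn_of_triangle_subset_of_card_eq hσ hab hac hbc hneg _ t ht (by omega)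

end ColorableOn

lemma exists_neg_triangle_of_not_signBalanced {V : Type*} {σ : V → V → ℤ} (hσ : IsSignature σ)
    (h : ¬ SignBalanced (⊤ : SimpleGraph V) σ) :
    ∃ a b c, a ≠ b ∧ a ≠ c ∧ b ≠ c ∧ σ a b * σ b c * σ a c = -1 := by
  classical
  by_contra! hpos
  apply h
  rcases isEmpty_or_nonempty V with hV | ⟨⟨a⟩⟩
  · exact ⟨fun _ => 1, by simp, fun u => isEmptyElim u⟩
  refine ⟨fun v => if v = a then 1 else σ a v, fun v => ?_, fun u v huv => ?_⟩
  · by_cases hv : v = a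
    · simp [hv]
    · simpa [hv] using hσ.2 a v
  · have huv : u ≠ v := huv
    by_cases hua : u = a <;> by_cases hva : v = a
    · exact absurd (hua.trans hva.symm) huv
    · simp [hua, hva]
    · simp [hua, hva, hσ.1 u a]
    · have htri := hpos a u v (Ne.symm hua) (Ne.symm hva) huv
      simp only [hua, hva, if_false]
      rcases hσ.2 a u with h1 | h1 <;> rcases hσ.2 u v with h2 | h2 <;>
        rcases hσ.2 a v with h3 | h3 <;> simp_all

theorem unbalanced_complete_chromatic_le_general
    {V : Type*} [Fintype V] (σ : V → V → ℤ) (hσ : IsSignature σ)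
    (hunb : ¬ SignBalanced (⊤ : SimpleGraph V) σ) :
    signedChromaticNumber (⊤ : SimpleGraph V) σ ≤ Fintype.card V - 1 := by
  classical
  obtain ⟨a, b, c, hab, hac, hbc, hneg⟩ := exists_neg_triangle_of_not_signBalanced hσ hunb
  have h := signedColorableOn_of_triangle_subset hσ hab hac hbc hneg (Finset.subset_univ _)
  exact Nat.sInf_le (Finset.card_univ (α := V) ▸ h).signedColorable_top

/-- Every unbalanced signed complete graph on `n ≥ 3` vertices has `χ(G) ≤ n − 1`. -/
theorem unbalanced_complete_chromatic_le
    {V : Type*} [Fintype V] (σ : V → V → ℤ) (hσ : IsSignature σ)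
    (hcard : 3 ≤ Fintype.card V) (hunb : ¬ SignBalanced (⊤ : SimpleGraph V) σ) :
    signedChromaticNumber (⊤ : SimpleGraph V) σ ≤ Fintype.card V - 1 :=
  unbalanced_complete_chromatic_le_general σ hσ hunb
end
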